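/- arXiv:1511.02146 — 3 statements merged into one kernel-verified Lean document; each statement's English description precedes it below -/
import Mathlib

section
/- For every t > 0, the operator T(t) : L²₀(ℤ_p^n) → L²₀(ℤ_p^n) is compact, self-adjoint (⟨T(t)f, g⟩ = ⟨f, T(t)g⟩ for all f, g ∈ L²₀(ℤ_p^n)), and non-negative (⟨T(t)f, f⟩ ≥ 0 for all f ∈ L²₀(ℤ_p^n)). -/
open MeasureTheory Filter Topology Metric

noncomputable instance qpnMeasurableSpace {p : ℕ} [Fact p.Prime] {n : ℕ} :
    MeasurableSpace (Fin n → ℚ_[p]) := borel _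

instance qpnBorelSpace {p : ℕ} [Fact p.Prime] {n : ℕ} :
    BorelSpace (Fin n → ℚ_[p]) := ⟨rfl⟩

namespace PadicHeat

variable {p : ℕ} [Fact p.Prime] {n : ℕ}

/-- The pairing `ξ·x = Σ_j ξ_j x_j` on `ℚ_p^n`. -/
noncomputable def dotQ (ξ x : Fin n → ℚ_[p]) : ℚ_[p] := ∑ j, ξ j * x j

/-- The heat kernel `K(x,t) = ∫_{ℚ_p^n∖ℤ_p^n} ψ(−x·ξ) e^{−tA(ξ)} dⁿξ`. -/
noncomputable def heatK (μ : Measure (Fin n → ℚ_[p])) (ψ : ℚ_[p] → ℂ)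
    (A : (Fin n → ℚ_[p]) → ℝ) (t : ℝ) (x : Fin n → ℚ_[p]) : ℂ :=
  ∫ ξ in {ξ : Fin n → ℚ_[p] | 1 < ‖ξ‖}, ψ (-dotQ x ξ) * (Real.exp (-(t * A ξ)) : ℂ) ∂μ

open Classical in
/-- The semigroup `T(t)`: the identity for `t = 0` and convolution with `K(·,t)` for `t ≠ 0`. -/
noncomputable def heatT (μ : Measure (Fin n → ℚ_[p])) (ψ : ℚ_[p] → ℂ)
    (A : (Fin n → ℚ_[p]) → ℝ) (t : ℝ) (f : (Fin n → ℚ_[p]) → ℂ)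
    (x : Fin n → ℚ_[p]) : ℂ :=
  if t = 0 then f x else ∫ y, heatK μ ψ A t y * f (x - y) ∂μ

/-- The `p`-adic Fourier transform `f̂(ξ) = ∫ ψ(ξ·x) f(x) dⁿx`. -/
noncomputable def fourierQ (μ : Measure (Fin n → ℚ_[p])) (ψ : ℚ_[p] → ℂ)
    (f : (Fin n → ℚ_[p]) → ℂ) (ξ : Fin n → ℚ_[p]) : ℂ :=
  ∫ x, ψ (dotQ ξ x) * f x ∂μ

/-- The pseudodifferential operator `A_β`, `(A_β f)(x) = ∫ ψ(−ξ·x) A(ξ) f̂(ξ) dⁿξ`. -/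
noncomputable def opA (μ : Measure (Fin n → ℚ_[p])) (ψ : ℚ_[p] → ℂ)
    (A : (Fin n → ℚ_[p]) → ℝ) (f : (Fin n → ℚ_[p]) → ℂ) (x : Fin n → ℚ_[p]) : ℂ :=
  ∫ ξ, ψ (-dotQ ξ x) * (A ξ : ℂ) * fourierQ μ ψ f ξ ∂μ

/-- Membership in the Lizorkin space `𝓛₀(ℤ_p^n)`: locally constant, supported in the unit
ball, with zero mean. -/
def MemL0 (μ : Measure (Fin n → ℚ_[p])) (f : (Fin n → ℚ_[p]) → ℂ) : Prop :=
  IsLocallyConstant f ∧ (∀ x : Fin n → ℚ_[p], 1 < ‖x‖ → f x = 0) ∧ (∫ x, f x ∂μ) = 0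

/-- Membership in `L²₀(ℤ_p^n)`: square integrable, vanishing (a.e.) outside the unit ball,
with zero mean. -/
def MemL20 (μ : Measure (Fin n → ℚ_[p])) (f : (Fin n → ℚ_[p]) → ℂ) : Prop :=
  MemLp f 2 μ ∧ (∀ᵐ x ∂μ, 1 < ‖x‖ → f x = 0) ∧ (∫ x, f x ∂μ) = 0

/-- The wavelet `ω_{γbk}(x) = p^{−nγ/2} ψ(p^{−1} k·(p^γ x − b)) Ω(‖p^γ x − b‖_p)`. -/
noncomputable def omegaFn (ψ : ℚ_[p] → ℂ) (γ : ℤ) (b : Fin n → ℚ_[p]) (k : Fin n → ℕ)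
    (x : Fin n → ℚ_[p]) : ℂ :=
  ((p : ℝ) ^ (-((n : ℝ) * (γ : ℝ)) / 2) : ℝ) *
    ψ ((p : ℚ_[p])⁻¹ * ∑ j, (k j : ℚ_[p]) * ((p : ℚ_[p]) ^ γ * x j - b j)) *
    (if ‖(fun j => (p : ℚ_[p]) ^ γ * x j - b j : Fin n → ℚ_[p])‖ ≤ 1 then 1 else 0)

end PadicHeat

open PadicHeat

/-! By Fubini, `T(t)f(x) = ∫_{‖ξ‖>1} ψ(-x·ξ) e^{-tA(ξ)} f̂(ξ) dξ`, and `e^{-tA}` is integrable on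
`‖ξ‖ > 1` because `A(ξ) ≥ C₀‖ξ‖^β` while the ball of radius `p^m` has measure at most `p^{mn}`.
This representation gives `⟨T(t)f, h⟩ = ∫_{‖ξ‖>1} e^{-tA(ξ)} f̂(ξ) conj(ĥ(ξ)) dξ`, whence
self-adjointness and non-negativity. For compactness, the functions `T(t)f` with `‖f‖₁ ≤ 1` are
uniformly bounded, vanish outside `ℤ_p^n` (since `f̂` is invariant under translation by `ℤ_p^n`
while `ξ ↦ ψ(-x·ξ)` is not when `‖x‖ > 1`), and share the modulus of continuity
`r ↦ 2 ∫_{‖ξ‖>max(1,1/r)} e^{-tA(ξ)} dξ`; Arzelà–Ascoli on the compact unit ball then gives a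
uniformly, hence `L²`, convergent subsequence. -/

open scoped ENNReal

lemma summable_pow_mul_exp_neg_mul_pow {c q d : ℝ} (hc : 0 < c) (hq : 1 < q) (hd : 0 < d) :
    Summable fun m : ℕ => d ^ m * Real.exp (-(c * q ^ m)) := by
  refine summable_of_ratio_test_tendsto_lt_one zero_lt_one
    (Eventually.of_forall fun m => by positivity) ?_
  have hratio : ∀ m : ℕ, ‖d ^ (m + 1) * Real.exp (-(c * q ^ (m + 1)))‖
      / ‖d ^ m * Real.exp (-(c * q ^ m))‖ = d * Real.exp (-(c * (q - 1) * q ^ m)) := fun m => by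
    have hexp : Real.exp (-(c * q ^ (m + 1)))
        = Real.exp (-(c * (q - 1) * q ^ m)) * Real.exp (-(c * q ^ m)) := by
      rw [← Real.exp_add]; ring_nf
    rw [Real.norm_of_nonneg (by positivity), Real.norm_of_nonneg (by positivity),
      div_eq_iff (by positivity), hexp]
    ring
  simp only [hratio]
  simpa using tendsto_const_nhds (x := d) |>.mul <| Real.tendsto_exp_neg_atTop_nhds_zero.comp <|
    (tendsto_pow_atTop_atTop_of_one_lt hq).const_mul_atTop (mul_pos hc (sub_pos.mpr hq))

section SupportedFunctions

variable {X E : Type*} [MeasurableSpace X] [NormedAddCommGroup E] {μ : Measure X} {s : Set X}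
  {f : X → E}

lemma ae_eq_indicator_of_ae_eq_zero_compl (h0 : ∀ᵐ x ∂μ, x ∉ s → f x = 0) :
    f =ᵐ[μ] s.indicator f := by
  filter_upwards [h0] with x hx
  by_cases hxs : x ∈ s
  · rw [Set.indicator_of_mem hxs]
  · rw [Set.indicator_of_notMem hxs, hx hxs]

lemma MemLp.integrable_of_ae_eq_zero_compl {q : ℝ≥0∞} (hf : MemLp f q μ) (hq : 1 ≤ q)
    (hs : MeasurableSet s) (hμs : μ s ≠ ∞) (h0 : ∀ᵐ x ∂μ, x ∉ s → f x = 0) : Integrable f μ := by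
  have : IsFiniteMeasure (μ.restrict s) := isFiniteMeasure_restrict.mpr hμs
  exact ((integrable_indicator_iff hs).mpr ((hf.restrict s).integrable hq)).congr
    (ae_eq_indicator_of_ae_eq_zero_compl h0).symm

lemma eLpNorm_one_le_eLpNorm_two_of_ae_eq_zero_compl (hf : AEStronglyMeasurable f μ)
    (hs : MeasurableSet s) (hμs : μ s ≤ 1) (h0 : ∀ᵐ x ∂μ, x ∉ s → f x = 0) :
    eLpNorm f 1 μ ≤ eLpNorm f 2 μ := by
  have hrestrict : ∀ q, eLpNorm f q μ = eLpNorm f q (μ.restrict s) := fun q => by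
    rw [eLpNorm_congr_ae (ae_eq_indicator_of_ae_eq_zero_compl h0),
      eLpNorm_indicator_eq_eLpNorm_restrict hs]
  rw [hrestrict, hrestrict]
  refine (eLpNorm_le_eLpNorm_mul_rpow_measure_univ (p := 1) (q := 2) (by norm_num)
    hf.restrict).trans ?_
  rw [Measure.restrict_apply_univ]
  exact mul_le_of_le_one_right zero_le (ENNReal.rpow_le_one hμs (by norm_num))

lemma eLpNorm_le_of_norm_le_of_eq_zero_compl {q : ℝ≥0∞} {C : ℝ} (hs : MeasurableSet s)
    (hb : ∀ x, ‖f x‖ ≤ C) (h0 : ∀ x ∉ s, f x = 0) :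
    eLpNorm f q μ ≤ μ s ^ q.toReal⁻¹ * ENNReal.ofReal C := by
  rw [eLpNorm_congr_ae (ae_eq_indicator_of_ae_eq_zero_compl (ae_of_all _ h0)),
    eLpNorm_indicator_eq_eLpNorm_restrict hs, ← Measure.restrict_apply_univ]
  exact eLpNorm_le_of_ae_bound (Eventually.of_forall hb)

end SupportedFunctions

lemma tendsto_setIntegral_one_lt_mul_norm {X E : Type*} [NormedAddCommGroup X] [MeasurableSpace X]
    [OpensMeasurableSpace X] [NormedAddCommGroup E] [NormedSpace ℝ E] {ν : Measure X}
    {g : X → E} (hg : Integrable g ν) :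
    Tendsto (fun r : ℝ => ∫ ξ in {ξ | 1 < r * ‖ξ‖}, g ξ ∂ν) (𝓝 0) (𝓝 0) := by
  have hmeas : ∀ r : ℝ, MeasurableSet {ξ : X | 1 < r * ‖ξ‖} := fun r =>
    measurableSet_lt measurable_const (measurable_norm.const_mul r)
  simp only [← integral_indicator (hmeas _)]
  rw [show (𝓝 (0 : E)) = 𝓝 (∫ _ : X, (0 : E) ∂ν) by simp]
  refine tendsto_integral_filter_of_dominated_convergence (fun ξ => ‖g ξ‖)
    (Eventually.of_forall fun r => hg.aestronglyMeasurable.indicator (hmeas r))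
    (Eventually.of_forall fun r => Eventually.of_forall fun ξ => norm_indicator_le_norm_self _ _)
    hg.norm (Eventually.of_forall fun ξ => tendsto_const_nhds.congr' ?_)
  have hsmall : ∀ᶠ r : ℝ in 𝓝 0, r * ‖ξ‖ < 1 :=
    (continuous_id.mul continuous_const).continuousAt.eventually_lt continuousAt_const
      (by simp)
  filter_upwards [hsmall] with r hr
  exact (Set.indicator_of_notMem (s := {ξ : X | 1 < r * ‖ξ‖}) (not_lt.mpr hr.le) g).symm

open BoundedContinuousFunction in
/-- Arzelà–Ascoli on `K`; the uniform limit is extended by `0` off `K`. -/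
theorem exists_subseq_tendsto_eLpNorm_of_equicontinuous {X : Type*} [MetricSpace X]
    [MeasurableSpace X] [OpensMeasurableSpace X] {μ : Measure X} {K : Set X} (hK : IsCompact K)
    (hμK : μ K ≠ ∞) {u : ℕ → X → ℂ} {C : ℝ} (hequi : Equicontinuous u)
    (hbound : ∀ m x, ‖u m x‖ ≤ C) (hzero : ∀ m, ∀ x ∉ K, u m x = 0) (q : ℝ≥0∞) :
    ∃ (φ : ℕ → ℕ) (v : X → ℂ), StrictMono φ ∧ MemLp v q μ ∧
      Tendsto (fun j => eLpNorm (fun x => u (φ j) x - v x) q μ) atTop (𝓝 0) := by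
  classical
  have : CompactSpace K := isCompact_iff_compactSpace.mp hK
  let F : ℕ → K →ᵇ ℂ := fun m =>
    mkOfCompact ⟨fun y => u m y, (hequi.continuous m).comp continuous_subtype_val⟩
  have hFequi : Equicontinuous fun m => ⇑(F m) := fun y U hU =>
    (continuous_subtype_val.tendsto y).eventually (hequi y U hU)
  have hcompact : IsCompact (closure (Set.range F)) := by
    refine arzela_ascoli (closedBall 0 C) (isCompact_closedBall 0 C) _
      (by rintro _ y ⟨m, rfl⟩; simpa [F] using hbound m y) ?_
    convert hFequi.comp (Set.rangeSplitting F) using 1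
    funext a
    exact congrArg _ (Set.apply_rangeSplitting F a).symm
  obtain ⟨G, -, φ, hφ, hG⟩ := hcompact.tendsto_subseq fun m => subset_closure ⟨m, rfl⟩
  set v : X → ℂ := fun x => if hx : x ∈ K then G ⟨x, hx⟩ else 0
  have hvzero : ∀ x ∉ K, v x = 0 := fun x hx => dif_neg hx
  have hdist : ∀ j x, ‖u (φ j) x - v x‖ ≤ dist (F (φ j)) G := fun j x => by
    by_cases hx : x ∈ K
    · simpa [v, F, hx, dist_eq_norm] using dist_coe_le_dist (f := F (φ j)) (g := G) ⟨x, hx⟩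
    · simp [hvzero x hx, hzero _ x hx]
  have hdist0 : Tendsto (fun j => dist (F (φ j)) G) atTop (𝓝 0) :=
    tendsto_iff_dist_tendsto_zero.mp hG
  have hlim : ∀ x, Tendsto (fun j => u (φ j) x) atTop (𝓝 (v x)) := fun x =>
    tendsto_iff_norm_sub_tendsto_zero.mpr <| squeeze_zero (fun _ => norm_nonneg _)
      (fun j => hdist j x) hdist0
  have hK_meas := hK.isClosed.measurableSet
  have hμK' : μ K ^ q.toReal⁻¹ ≠ ∞ := ENNReal.rpow_ne_top_of_nonneg (by positivity) hμK
  refine ⟨φ, v, hφ, ⟨aestronglyMeasurable_of_tendsto_ae atTop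
    (fun j => (hequi.continuous _).aestronglyMeasurable) (ae_of_all _ hlim), ?_⟩, ?_⟩
  · refine (eLpNorm_le_of_norm_le_of_eq_zero_compl hK_meas (C := C)
      (fun x => le_of_tendsto' (hlim x).norm fun j => hbound _ x) hvzero).trans_lt ?_
    exact ENNReal.mul_lt_top hμK'.lt_top ENNReal.ofReal_lt_top
  · have hbound' : Tendsto (fun j => μ K ^ q.toReal⁻¹ * ENNReal.ofReal (dist (F (φ j)) G))
        atTop (𝓝 0) := by
      simpa using ENNReal.Tendsto.const_mul (ENNReal.tendsto_ofReal hdist0) (Or.inr hμK')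
    refine tendsto_of_tendsto_of_tendsto_of_le_of_le tendsto_const_nhds hbound'
      (fun _ => zero_le) fun j => eLpNorm_le_of_norm_le_of_eq_zero_compl hK_meas (hdist j)
      fun x hx => by simp [hvzero x hx, hzero _ x hx]

namespace PadicHeat

variable {p : ℕ} [Fact p.Prime] {n : ℕ}

lemma one_lt_prime_cast : (1 : ℝ) < p := Nat.one_lt_cast.mpr (Fact.out : p.Prime).one_lt

lemma dotQ_comm (ξ x : Fin n → ℚ_[p]) : dotQ ξ x = dotQ x ξ := by
  simp only [dotQ, mul_comm]

lemma dotQ_add_left (ξ η x : Fin n → ℚ_[p]) : dotQ (ξ + η) x = dotQ ξ x + dotQ η x := by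
  simp only [dotQ, Pi.add_apply, add_mul, Finset.sum_add_distrib]

lemma dotQ_sub_left (ξ η x : Fin n → ℚ_[p]) : dotQ (ξ - η) x = dotQ ξ x - dotQ η x := by
  simp only [dotQ, Pi.sub_apply, sub_mul, Finset.sum_sub_distrib]

lemma norm_dotQ_le (ξ x : Fin n → ℚ_[p]) : ‖dotQ ξ x‖ ≤ ‖ξ‖ * ‖x‖ :=
  IsUltrametricDist.norm_sum_le_of_forall_le_of_nonneg (by positivity) fun i _ => by
    rw [norm_mul]
    exact mul_le_mul (norm_le_pi_norm ξ i) (norm_le_pi_norm x i) (norm_nonneg _) (norm_nonneg _)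

lemma continuous_dotQ :
    Continuous fun z : (Fin n → ℚ_[p]) × (Fin n → ℚ_[p]) => dotQ z.1 z.2 :=
  continuous_finsetSum _ fun j _ =>
    ((continuous_apply j).comp continuous_fst).mul ((continuous_apply j).comp continuous_snd)

lemma exists_norm_eq_norm_apply {x : Fin n → ℚ_[p]} (hx : x ≠ 0) : ∃ j, ‖x‖ = ‖x j‖ := by
  have : Nonempty (Fin n) := by
    by_contra h
    exact hx (funext fun j => (not_nonempty_iff.mp h).elim j)
  obtain ⟨j, -, hj⟩ := Finset.exists_mem_eq_sup Finset.univ Finset.univ_nonempty fun b => ‖x b‖₊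
  exact ⟨j, by rw [Pi.norm_def, hj]; rfl⟩

lemma exists_norm_eq_zpow {x : Fin n → ℚ_[p]} (hx : x ≠ 0) : ∃ z : ℤ, ‖x‖ = (p : ℝ) ^ z := by
  obtain ⟨j, hj⟩ := exists_norm_eq_norm_apply hx
  have hxj : x j ≠ 0 := fun h => hx (norm_eq_zero.mp (by rw [hj, h, norm_zero]))
  exact ⟨_, hj.trans (Padic.norm_eq_zpow_neg_valuation hxj)⟩

lemma countable_range_norm : (Set.range fun x : Fin n → ℚ_[p] => ‖x‖).Countable := by
  refine ((Set.countable_range fun z : ℤ => (p : ℝ) ^ z).insert 0).mono ?_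
  rintro _ ⟨x, rfl⟩
  rcases eq_or_ne x 0 with rfl | hx
  · exact Or.inl norm_zero
  · obtain ⟨z, hz⟩ := exists_norm_eq_zpow hx
    exact Or.inr ⟨z, hz.symm⟩

/-- Norms take countably many values, so every radial function is measurable. -/
lemma measurable_comp_norm {β : Type*} [MeasurableSpace β] (g : ℝ → β) :
    Measurable fun x : Fin n → ℚ_[p] => g ‖x‖ := by
  have : Countable (Set.range fun x : Fin n → ℚ_[p] => ‖x‖) := countable_range_norm.to_subtype
  exact (measurable_of_countable fun r : Set.range (fun x : Fin n → ℚ_[p] => ‖x‖) => g r).comp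
    (measurable_norm.subtype_mk (h := fun x => ⟨x, rfl⟩))

lemma exists_zpow_of_one_lt_norm {x : Fin n → ℚ_[p]} (hx : 1 < ‖x‖) :
    ∃ z : ℤ, 1 ≤ z ∧ ‖x‖ = (p : ℝ) ^ z := by
  obtain ⟨z, hz⟩ := exists_norm_eq_zpow (x := x) (by rintro rfl; norm_num at hx)
  refine ⟨z, ?_, hz⟩
  by_contra! h
  exact (zpow_le_one_of_nonpos₀ one_lt_prime_cast.le (by omega)).not_gt (hz ▸ hx)

lemma prime_le_norm_of_one_lt {x : Fin n → ℚ_[p]} (hx : 1 < ‖x‖) : (p : ℝ) ≤ ‖x‖ := by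
  obtain ⟨z, hz1, hz⟩ := exists_zpow_of_one_lt_norm hx
  simpa [hz] using zpow_le_zpow_right₀ one_lt_prime_cast.le hz1

lemma exists_pow_lt_norm_le_pow_succ {x : Fin n → ℚ_[p]} (hx : 1 < ‖x‖) :
    ∃ m : ℕ, (p : ℝ) ^ m < ‖x‖ ∧ ‖x‖ ≤ (p : ℝ) ^ (m + 1) := by
  obtain ⟨z, hz1, hz⟩ := exists_zpow_of_one_lt_norm hx
  refine ⟨(z - 1).toNat, ?_, ?_⟩ <;> rw [hz, ← zpow_natCast]
  · exact zpow_lt_zpow_right₀ one_lt_prime_cast (by omega)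
  · exact zpow_le_zpow_right₀ one_lt_prime_cast.le (by omega)

lemma exists_lt_norm_sub_div_le_one {y : ℚ_[p]} {m : ℕ} (hy : ‖y‖ ≤ (p : ℝ) ^ m) :
    ∃ k < p ^ m, ‖y - (k : ℚ_[p]) / (p : ℚ_[p]) ^ m‖ ≤ 1 := by
  have hp0 : (p : ℚ_[p]) ^ m ≠ 0 := pow_ne_zero _ (by exact_mod_cast (Fact.out : p.Prime).ne_zero)
  have hz : ‖(p : ℚ_[p]) ^ m * y‖ ≤ 1 := by
    rw [norm_mul, norm_pow, Padic.norm_p, inv_pow]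
    exact inv_mul_le_one_of_le₀ hy (by positivity)
  set z : ℤ_[p] := ⟨_, hz⟩
  refine ⟨z.appr m, PadicInt.appr_lt z m, ?_⟩
  have hspec : ‖z - (z.appr m : ℤ_[p])‖ ≤ (p : ℝ) ^ (-(m : ℤ)) :=
    (PadicInt.norm_le_pow_iff_mem_span_pow _ m).mpr (PadicInt.appr_spec m z)
  have heq : y - (z.appr m : ℚ_[p]) / (p : ℚ_[p]) ^ m
      = ((z - (z.appr m : ℤ_[p]) : ℤ_[p]) : ℚ_[p]) / (p : ℚ_[p]) ^ m := by
    push_cast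
    field_simp
    simp [z, mul_comm]
  rw [heq, norm_div, PadicInt.padic_norm_e_of_padicInt, norm_pow, Padic.norm_p, inv_pow,
    div_inv_eq_mul]
  calc ‖z - (z.appr m : ℤ_[p])‖ * (p : ℝ) ^ m ≤ (p : ℝ) ^ (-(m : ℤ)) * (p : ℝ) ^ m := by
        gcongr
    _ = 1 := by
        rw [zpow_neg, zpow_natCast,
          inv_mul_cancel₀ (pow_pos (zero_lt_one.trans one_lt_prime_cast) m).ne']

/-- `closedBall 0 (p ^ m)` is covered by `p ^ (m * n)` translates of the unit ball. -/
lemma measure_closedBall_pow_le (μ : Measure (Fin n → ℚ_[p])) [μ.IsAddRightInvariant] (m : ℕ) :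
    μ (closedBall 0 ((p : ℝ) ^ m)) ≤ (p : ℝ≥0∞) ^ (m * n) * μ (closedBall 0 1) := by
  classical
  have hcenter : ∀ x ∈ closedBall (0 : Fin n → ℚ_[p]) ((p : ℝ) ^ m), ∃ k : Fin n → Fin (p ^ m),
      x ∈ closedBall (fun j => ((k j : ℕ) : ℚ_[p]) / (p : ℚ_[p]) ^ m) 1 := by
    intro x hx
    rw [mem_closedBall_zero_iff] at hx
    choose k hk hdist using fun j => exists_lt_norm_sub_div_le_one ((norm_le_pi_norm x j).trans hx)
    exact ⟨fun j => ⟨k j, hk j⟩, (dist_pi_le_iff zero_le_one).mpr fun j => by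
      simpa [dist_eq_norm] using hdist j⟩
  calc μ (closedBall 0 ((p : ℝ) ^ m))
      ≤ μ (⋃ k : Fin n → Fin (p ^ m),
          closedBall (fun j => ((k j : ℕ) : ℚ_[p]) / (p : ℚ_[p]) ^ m) 1) :=
        measure_mono fun x hx => Set.mem_iUnion.mpr (hcenter x hx)
    _ ≤ ∑ k : Fin n → Fin (p ^ m),
          μ (closedBall (fun j => ((k j : ℕ) : ℚ_[p]) / (p : ℚ_[p]) ^ m) 1) :=
        measure_iUnion_fintype_le _ _
    _ = (p : ℝ≥0∞) ^ (m * n) * μ (closedBall 0 1) := by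
        have htrans : ∀ c : Fin n → ℚ_[p], μ (closedBall c 1) = μ (closedBall 0 1) := fun c => by
          rw [← measure_preimage_add_right μ c]
          congr 1
          ext y
          simp [dist_eq_norm]
        simp only [htrans, Finset.sum_const, Finset.card_univ, Fintype.card_fun, Fintype.card_fin,
          nsmul_eq_mul]
        push_cast
        rw [← pow_mul]

lemma integrableOn_exp_neg_mul_norm_rpow (μ : Measure (Fin n → ℚ_[p])) [μ.IsAddHaarMeasure]
    {c β : ℝ} (hc : 0 < c) (hβ : 0 < β) :
    IntegrableOn (fun ξ => Real.exp (-(c * ‖ξ‖ ^ β))) {ξ | 1 < ‖ξ‖} μ := by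
  have hp : (0 : ℝ) < p := zero_lt_one.trans one_lt_prime_cast
  set q : ℝ := (p : ℝ) ^ β
  have hq : 1 < q := Real.one_lt_rpow one_lt_prime_cast hβ
  set shell : ℕ → Set (Fin n → ℚ_[p]) :=
    fun m => {ξ | (p : ℝ) ^ m < ‖ξ‖} ∩ closedBall 0 (p ^ (m + 1))
  have hcover : {ξ : Fin n → ℚ_[p] | 1 < ‖ξ‖} ⊆ ⋃ m, shell m := fun ξ hξ => by
    obtain ⟨m, h1, h2⟩ := exists_pow_lt_norm_le_pow_succ hξ
    exact Set.mem_iUnion.mpr ⟨m, h1, mem_closedBall_zero_iff.mpr h2⟩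
  have hshell : ∀ m, ∀ ξ ∈ shell m,
      ‖Real.exp (-(c * ‖ξ‖ ^ β))‖ₑ ≤ ENNReal.ofReal (Real.exp (-(c * q ^ m))) := by
    rintro m ξ ⟨hξ, -⟩
    rw [Real.enorm_eq_ofReal (Real.exp_pos _).le]
    refine ENNReal.ofReal_le_ofReal (Real.exp_le_exp.mpr (neg_le_neg
      (mul_le_mul_of_nonneg_left ?_ hc.le)))
    rw [← Real.rpow_natCast, ← Real.rpow_mul (by positivity), mul_comm,
      Real.rpow_mul (by positivity), Real.rpow_natCast]
    exact Real.rpow_le_rpow (by positivity) hξ.le hβ.le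
  have hsum : Summable fun m : ℕ => (p : ℝ) ^ ((m + 1) * n) * Real.exp (-(c * q ^ m)) := by
    refine ((summable_pow_mul_exp_neg_mul_pow hc hq (pow_pos hp n)).mul_left
      ((p : ℝ) ^ n)).congr fun m => ?_
    ring
  refine ⟨(Real.continuous_exp.comp (continuous_const.mul
    (continuous_norm.rpow_const fun _ => Or.inr hβ.le)).neg).aestronglyMeasurable, ?_⟩
  calc ∫⁻ ξ in {ξ | 1 < ‖ξ‖}, ‖Real.exp (-(c * ‖ξ‖ ^ β))‖ₑ ∂μ
      ≤ ∑' m, ∫⁻ ξ in shell m, ‖Real.exp (-(c * ‖ξ‖ ^ β))‖ₑ ∂μ :=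
        (lintegral_mono_set hcover).trans (lintegral_iUnion_le _ _)
    _ ≤ ∑' m, ENNReal.ofReal ((p : ℝ) ^ ((m + 1) * n) * Real.exp (-(c * q ^ m)))
          * μ (closedBall 0 1) := by
        refine ENNReal.tsum_le_tsum fun m => (setLIntegral_mono' ?_ (hshell m)).trans ?_
        · exact (measurableSet_lt measurable_const measurable_norm).inter measurableSet_closedBall
        · rw [setLIntegral_const, ENNReal.ofReal_mul (by positivity),
            ENNReal.ofReal_pow hp.le, ENNReal.ofReal_natCast,
            mul_comm ((p : ℝ≥0∞) ^ _) (ENNReal.ofReal _), mul_assoc]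
          gcongr
          exact (measure_mono Set.inter_subset_right).trans (measure_closedBall_pow_le μ (m + 1))
    _ < ⊤ := by
        rw [ENNReal.tsum_mul_right, ← ENNReal.ofReal_tsum_of_nonneg (fun m => by positivity) hsum]
        exact ENNReal.mul_lt_top ENNReal.ofReal_lt_top
          (isCompact_closedBall _ _).measure_lt_top

lemma integrableOn_exp_neg_mul_symbol (μ : Measure (Fin n → ℚ_[p])) [μ.IsAddHaarMeasure]
    {β C₀ t : ℝ} {A : (Fin n → ℚ_[p]) → ℝ} {g : ℝ → ℝ} (hβ : 0 < β) (hC₀ : 0 < C₀) (ht : 0 < t)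
    (hrad : ∀ ξ, A ξ = g ‖ξ‖) (hlow : ∀ ξ, C₀ * ‖ξ‖ ^ β ≤ A ξ) :
    IntegrableOn (fun ξ => Real.exp (-(t * A ξ))) {ξ | 1 < ‖ξ‖} μ := by
  refine (integrableOn_exp_neg_mul_norm_rpow μ (mul_pos ht hC₀) hβ).mono' ?_ ?_
  · simp only [hrad]
    exact (measurable_comp_norm fun r => Real.exp (-(t * g r))).aestronglyMeasurable
  · refine Eventually.of_forall fun ξ => ?_
    rw [Real.norm_of_nonneg (Real.exp_pos _).le, Real.exp_le_exp, mul_assoc]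
    exact neg_le_neg (mul_le_mul_of_nonneg_left (hlow ξ) ht.le)

structure IsUnitaryCharTrivialOnZp (ψ : ℚ_[p] → ℂ) : Prop where
  continuous : Continuous ψ
  map_add : ∀ a b, ψ (a + b) = ψ a * ψ b
  norm_eq_one : ∀ a, ‖ψ a‖ = 1
  eq_one_of_norm_le_one : ∀ a, ‖a‖ ≤ 1 → ψ a = 1

namespace IsUnitaryCharTrivialOnZp

variable {ψ : ℚ_[p] → ℂ} (hψ : IsUnitaryCharTrivialOnZp ψ)
include hψ

lemma map_add_of_norm_le_one (a : ℚ_[p]) {b : ℚ_[p]} (hb : ‖b‖ ≤ 1) : ψ (a + b) = ψ a := by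
  rw [hψ.map_add, hψ.eq_one_of_norm_le_one b hb, mul_one]

lemma conj_apply (a : ℚ_[p]) : (starRingEnd ℂ) (ψ a) = ψ (-a) := by
  have hinv : ψ a * ψ (-a) = 1 := by
    rw [← hψ.map_add, add_neg_cancel, hψ.eq_one_of_norm_le_one 0 (by simp)]
  calc (starRingEnd ℂ) (ψ a) = ((starRingEnd ℂ) (ψ a) * ψ a) * ψ (-a) := by
        rw [mul_assoc, hinv, mul_one]
    _ = ψ (-a) := by rw [Complex.conj_mul', hψ.norm_eq_one]; simp

end IsUnitaryCharTrivialOnZp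

section MemL20

variable {μ : Measure (Fin n → ℚ_[p])} {f : (Fin n → ℚ_[p]) → ℂ}

lemma MemL20.integrable (hμ : μ (closedBall 0 1) = 1) (hf : MemL20 μ f) : Integrable f μ :=
  MemLp.integrable_of_ae_eq_zero_compl (s := closedBall 0 1) hf.1 one_le_two
    measurableSet_closedBall (by simp [hμ])
    (by simpa using hf.2.1)

lemma MemL20.integral_norm_le_one (hμ : μ (closedBall 0 1) = 1) (hf : MemL20 μ f)
    (hf1 : eLpNorm f 2 μ ≤ 1) : ∫ x, ‖f x‖ ∂μ ≤ 1 := by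
  rw [← ENNReal.ofReal_le_one, ofReal_integral_norm_eq_lintegral_enorm (hf.integrable hμ),
    ← eLpNorm_one_eq_lintegral_enorm]
  exact (eLpNorm_one_le_eLpNorm_two_of_ae_eq_zero_compl hf.1.1 measurableSet_closedBall hμ.le
    (by simpa using hf.2.1)).trans hf1

end MemL20

section Fourier

variable {μ : Measure (Fin n → ℚ_[p])} {ψ : ℚ_[p] → ℂ} {f h : (Fin n → ℚ_[p]) → ℂ}

lemma aestronglyMeasurable_fourierQ [SFinite μ] {ν : Measure (Fin n → ℚ_[p])} [SFinite ν]
    (hψ : Continuous ψ) (hf : AEStronglyMeasurable f μ) :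
    AEStronglyMeasurable (fourierQ μ ψ f) ν :=
  AEStronglyMeasurable.integral_prod_right' (f := fun z => ψ (dotQ z.1 z.2) * f z.2)
    ((hψ.comp continuous_dotQ).aestronglyMeasurable.mul
      (hf.comp_quasiMeasurePreserving Measure.quasiMeasurePreserving_snd))

lemma norm_fourierQ_le (hψ : ∀ a, ‖ψ a‖ = 1) (ξ : Fin n → ℚ_[p]) :
    ‖fourierQ μ ψ f ξ‖ ≤ ∫ x, ‖f x‖ ∂μ :=
  (norm_integral_le_integral_norm _).trans_eq <| by simp only [norm_mul, hψ, one_mul]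

lemma fourierQ_add_of_norm_le_one (hψ : IsUnitaryCharTrivialOnZp ψ)
    (hf : ∀ᵐ x ∂μ, 1 < ‖x‖ → f x = 0) (ξ : Fin n → ℚ_[p]) {u : Fin n → ℚ_[p]} (hu : ‖u‖ ≤ 1) :
    fourierQ μ ψ f (ξ + u) = fourierQ μ ψ f ξ := by
  refine integral_congr_ae ?_
  filter_upwards [hf] with x hx
  by_cases hx1 : ‖x‖ ≤ 1
  · rw [dotQ_add_left, hψ.map_add_of_norm_le_one _
      ((norm_dotQ_le u x).trans (mul_le_one₀ hu (norm_nonneg x) hx1))]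
  · simp [hx (not_le.mp hx1)]

lemma conj_fourierQ (hψ : IsUnitaryCharTrivialOnZp ψ) (ξ : Fin n → ℚ_[p]) :
    (starRingEnd ℂ) (fourierQ μ ψ h ξ) = ∫ x, ψ (-dotQ x ξ) * (starRingEnd ℂ) (h x) ∂μ := by
  rw [fourierQ, ← integral_conj]
  simp only [map_mul, hψ.conj_apply, dotQ_comm ξ]

end Fourier

section Heat

variable {μ : Measure (Fin n → ℚ_[p])} [μ.IsAddHaarMeasure] {ψ : ℚ_[p] → ℂ}
  {A : (Fin n → ℚ_[p]) → ℝ} {t : ℝ} {f h : (Fin n → ℚ_[p]) → ℂ}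

lemma heatT_eq_setIntegral_fourierQ (hψ : IsUnitaryCharTrivialOnZp ψ) (ht : t ≠ 0)
    (hE : IntegrableOn (fun ξ => Real.exp (-(t * A ξ))) {ξ | 1 < ‖ξ‖} μ) (hf : Integrable f μ)
    (x : Fin n → ℚ_[p]) :
    heatT μ ψ A t f x = ∫ ξ in {ξ | 1 < ‖ξ‖},
      ψ (-dotQ x ξ) * (Real.exp (-(t * A ξ)) : ℂ) * fourierQ μ ψ f ξ ∂μ := by
  have hint : Integrable (Function.uncurry fun y ξ =>
      ψ (-dotQ y ξ) * (Real.exp (-(t * A ξ)) : ℂ) * f (x - y))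
      (μ.prod (μ.restrict {ξ | 1 < ‖ξ‖})) := by
    refine (Integrable.mul_prod (hf.comp_sub_left x).norm hE).mono ?_
      (Eventually.of_forall fun z => le_of_eq ?_)
    · exact ((hψ.continuous.comp continuous_dotQ.neg).aestronglyMeasurable.mul
        ((Complex.continuous_ofReal.comp_aestronglyMeasurable
          hE.aestronglyMeasurable).comp_quasiMeasurePreserving
          Measure.quasiMeasurePreserving_snd)).mul
        ((hf.comp_sub_left x).aestronglyMeasurable.comp_quasiMeasurePreserving
          Measure.quasiMeasurePreserving_fst)
    · simp only [Function.uncurry, norm_mul, hψ.norm_eq_one, one_mul, Complex.norm_real,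
        norm_norm, Real.norm_of_nonneg (Real.exp_pos _).le, mul_comm]
  rw [heatT, if_neg ht]
  calc ∫ y, heatK μ ψ A t y * f (x - y) ∂μ
      = ∫ y, ∫ ξ in {ξ | 1 < ‖ξ‖},
          ψ (-dotQ y ξ) * (Real.exp (-(t * A ξ)) : ℂ) * f (x - y) ∂μ ∂μ := by
        simp only [heatK, integral_mul_const]
    _ = ∫ ξ in {ξ | 1 < ‖ξ‖}, ∫ y,
          ψ (-dotQ y ξ) * (Real.exp (-(t * A ξ)) : ℂ) * f (x - y) ∂μ ∂μ :=
        integral_integral_swap hint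
    _ = _ := by
        congr 1 with ξ
        rw [← integral_sub_left_eq_self _ μ x]
        have hsplit : ∀ z, -dotQ (x - z) ξ = -dotQ x ξ + dotQ ξ z := fun z => by
          rw [dotQ_sub_left, dotQ_comm ξ]; ring
        simp only [sub_sub_cancel, hsplit, hψ.map_add, fourierQ, ← integral_const_mul]
        congr 1 with z
        ring

lemma integrableOn_heatT_integrand (hψ : IsUnitaryCharTrivialOnZp ψ)
    (hE : IntegrableOn (fun ξ => Real.exp (-(t * A ξ))) {ξ | 1 < ‖ξ‖} μ) (hf : Integrable f μ)
    (x : Fin n → ℚ_[p]) :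
    IntegrableOn (fun ξ => ψ (-dotQ x ξ) * (Real.exp (-(t * A ξ)) : ℂ) * fourierQ μ ψ f ξ)
      {ξ | 1 < ‖ξ‖} μ := by
  refine (hE.mul_const (∫ z, ‖f z‖ ∂μ)).mono ?_ (Eventually.of_forall fun ξ => ?_)
  · exact ((hψ.continuous.comp (continuous_dotQ.comp (Continuous.prodMk_right x)).neg
      ).aestronglyMeasurable.mul
      (Complex.continuous_ofReal.comp_aestronglyMeasurable hE.aestronglyMeasurable)).mul
      (aestronglyMeasurable_fourierQ hψ.continuous hf.aestronglyMeasurable)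
  · rw [norm_mul, norm_mul, hψ.norm_eq_one, one_mul, Complex.norm_real, norm_mul,
      Real.norm_of_nonneg (integral_nonneg fun _ => norm_nonneg _)]
    exact mul_le_mul_of_nonneg_left (norm_fourierQ_le hψ.norm_eq_one ξ) (norm_nonneg _)

lemma norm_heatT_le (hψ : IsUnitaryCharTrivialOnZp ψ) (ht : t ≠ 0)
    (hE : IntegrableOn (fun ξ => Real.exp (-(t * A ξ))) {ξ | 1 < ‖ξ‖} μ) (hf : Integrable f μ)
    (x : Fin n → ℚ_[p]) :
    ‖heatT μ ψ A t f x‖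
      ≤ (∫ ξ in {ξ | 1 < ‖ξ‖}, Real.exp (-(t * A ξ)) ∂μ) * ∫ z, ‖f z‖ ∂μ := by
  rw [heatT_eq_setIntegral_fourierQ hψ ht hE hf, ← integral_mul_const]
  refine norm_integral_le_of_norm_le (hE.mul_const _) (Eventually.of_forall fun ξ => ?_)
  rw [norm_mul, norm_mul, hψ.norm_eq_one, one_mul, Complex.norm_real,
    Real.norm_of_nonneg (Real.exp_pos _).le]
  exact mul_le_mul_of_nonneg_left (norm_fourierQ_le hψ.norm_eq_one ξ) (Real.exp_pos _).le

/-- `ψ(-x·ξ) = ψ(-x'·ξ)` as soon as `‖x - x'‖ ‖ξ‖ ≤ 1`, so only high frequencies contribute. -/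
lemma dist_heatT_le (hψ : IsUnitaryCharTrivialOnZp ψ) (ht : t ≠ 0)
    (hE : IntegrableOn (fun ξ => Real.exp (-(t * A ξ))) {ξ | 1 < ‖ξ‖} μ) (hf : Integrable f μ)
    (x x' : Fin n → ℚ_[p]) :
    dist (heatT μ ψ A t f x) (heatT μ ψ A t f x') ≤ 2 * (∫ z, ‖f z‖ ∂μ) *
      ∫ ξ in {ξ | 1 < dist x x' * ‖ξ‖}, Real.exp (-(t * A ξ)) ∂μ.restrict {ξ | 1 < ‖ξ‖} := by
  rw [dist_eq_norm, heatT_eq_setIntegral_fourierQ hψ ht hE hf,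
    heatT_eq_setIntegral_fourierQ hψ ht hE hf, ← integral_sub
      (integrableOn_heatT_integrand hψ hE hf x) (integrableOn_heatT_integrand hψ hE hf x'),
    ← setIntegral_eq_integral_of_forall_compl_eq_zero (s := {ξ | 1 < dist x x' * ‖ξ‖}),
    ← integral_const_mul]
  · refine norm_integral_le_of_norm_le ((hE.integrableOn).const_mul _)
      (Eventually.of_forall fun ξ => ?_)
    rw [← sub_mul, ← sub_mul, norm_mul, norm_mul, Complex.norm_real,
      Real.norm_of_nonneg (Real.exp_pos _).le, mul_right_comm]
    refine mul_le_mul_of_nonneg_right (mul_le_mul ?_ (norm_fourierQ_le hψ.norm_eq_one ξ)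
      (norm_nonneg _) zero_le_two) (Real.exp_pos _).le
    exact (norm_sub_le _ _).trans (by rw [hψ.norm_eq_one, hψ.norm_eq_one]; norm_num)
  · intro ξ hξ
    have hsmall : ‖-dotQ (x - x') ξ‖ ≤ 1 := by
      rw [norm_neg]
      exact (norm_dotQ_le _ _).trans (by rw [← dist_eq_norm]; exact not_lt.mp hξ)
    have : -dotQ x ξ = -dotQ x' ξ + -dotQ (x - x') ξ := by rw [dotQ_sub_left]; ring
    rw [this, hψ.map_add_of_norm_le_one _ hsmall, sub_self]

lemma exists_norm_le_one_apply_dotQ_ne_one (hψ : ∃ a : ℚ_[p], ‖a‖ ≤ p ∧ ψ a ≠ 1)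
    {x : Fin n → ℚ_[p]} (hx : 1 < ‖x‖) : ∃ u, ‖u‖ ≤ 1 ∧ ψ (dotQ x u) ≠ 1 := by
  classical
  obtain ⟨a, ha, hψa⟩ := hψ
  obtain ⟨j, hj⟩ := exists_norm_eq_norm_apply (x := x) (by rintro rfl; norm_num at hx)
  have hxj : x j ≠ 0 := by rintro h; rw [h, norm_zero] at hj; rw [hj] at hx; norm_num at hx
  refine ⟨Pi.single j (a / x j), ?_, ?_⟩
  · rw [Pi.norm_single, norm_div, div_le_one (norm_pos_iff.mpr hxj), ← hj]
    exact ha.trans (prime_le_norm_of_one_lt hx)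
  · simpa [dotQ, Pi.single_apply, mul_div_cancel₀ _ hxj] using hψa

/-- Translating `ξ` by a `u ∈ ℤ_p^n` with `ψ(x·u) ≠ 1` multiplies the frequency integrand by
`ψ(-x·u) ≠ 1` and preserves the domain `‖ξ‖ > 1`, so the integral vanishes. -/
lemma heatT_eq_zero_of_one_lt_norm {g : ℝ → ℝ} (hψ : IsUnitaryCharTrivialOnZp ψ)
    (hψ' : ∃ a : ℚ_[p], ‖a‖ ≤ p ∧ ψ a ≠ 1) (hrad : ∀ ξ, A ξ = g ‖ξ‖) (ht : t ≠ 0)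
    (hE : IntegrableOn (fun ξ => Real.exp (-(t * A ξ))) {ξ | 1 < ‖ξ‖} μ) (hf : Integrable f μ)
    (hsupp : ∀ᵐ x ∂μ, 1 < ‖x‖ → f x = 0) {x : Fin n → ℚ_[p]} (hx : 1 < ‖x‖) :
    heatT μ ψ A t f x = 0 := by
  obtain ⟨u, hu, hψu⟩ := exists_norm_le_one_apply_dotQ_ne_one hψ' hx
  set S : Set (Fin n → ℚ_[p]) := {ξ | 1 < ‖ξ‖}
  set Φ : (Fin n → ℚ_[p]) → ℂ :=
    fun ξ => ψ (-dotQ x ξ) * (Real.exp (-(t * A ξ)) : ℂ) * fourierQ μ ψ f ξ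
  have hc : ψ (-dotQ x u) ≠ 1 := by
    rw [← hψ.conj_apply]
    exact fun h => hψu (by simpa using congrArg (starRingEnd ℂ) h)
  have hshift : ∀ ξ, S.indicator Φ (ξ + u) = ψ (-dotQ x u) * S.indicator Φ ξ := fun ξ => by
    by_cases hξ : ξ ∈ S
    · have hnorm : ‖ξ + u‖ = ‖ξ‖ := by
        rw [IsUltrametricDist.norm_add_eq_max_of_norm_ne_norm (hu.trans_lt hξ).ne',
          max_eq_left (hu.trans hξ.le)]
      have hξu : ξ + u ∈ S := by simpa [S, hnorm] using hξ
      simp only [Set.indicator_of_mem hξ, Set.indicator_of_mem hξu, Φ, hrad (ξ + u), hnorm,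
        ← hrad, fourierQ_add_of_norm_le_one hψ hsupp ξ hu, dotQ_comm x, dotQ_add_left, neg_add,
        hψ.map_add]
      ring
    · have hξu : ξ + u ∉ S := fun h => lt_irrefl (1 : ℝ) <| h.trans_le <|
        (IsUltrametricDist.norm_add_le_max ξ u).trans (max_le (not_lt.mp hξ) hu)
      simp [Set.indicator_of_notMem hξ, Set.indicator_of_notMem hξu]
  have hfix : ∫ ξ, S.indicator Φ ξ ∂μ = ψ (-dotQ x u) * ∫ ξ, S.indicator Φ ξ ∂μ := by
    rw [← integral_const_mul, ← integral_add_right_eq_self (S.indicator Φ) u]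
    exact integral_congr_ae (Eventually.of_forall hshift)
  rw [heatT_eq_setIntegral_fourierQ hψ ht hE hf,
    ← integral_indicator (measurableSet_lt measurable_const measurable_norm)]
  exact (mul_eq_zero.mp (by linear_combination hfix :
    (1 - ψ (-dotQ x u)) * ∫ ξ, S.indicator Φ ξ ∂μ = 0)).resolve_left (sub_ne_zero.mpr hc.symm)

lemma integral_heatT_mul_conj (hψ : IsUnitaryCharTrivialOnZp ψ) (ht : t ≠ 0)
    (hE : IntegrableOn (fun ξ => Real.exp (-(t * A ξ))) {ξ | 1 < ‖ξ‖} μ) (hf : Integrable f μ)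
    (hh : Integrable h μ) :
    ∫ x, heatT μ ψ A t f x * (starRingEnd ℂ) (h x) ∂μ = ∫ ξ in {ξ | 1 < ‖ξ‖},
      (Real.exp (-(t * A ξ)) : ℂ) * fourierQ μ ψ f ξ * (starRingEnd ℂ) (fourierQ μ ψ h ξ) ∂μ := by
  have hint : Integrable (Function.uncurry fun x ξ => ψ (-dotQ x ξ) * (Real.exp (-(t * A ξ)) : ℂ)
      * fourierQ μ ψ f ξ * (starRingEnd ℂ) (h x)) (μ.prod (μ.restrict {ξ | 1 < ‖ξ‖})) := by
    refine (Integrable.mul_prod hh.norm (hE.mul_const (∫ z, ‖f z‖ ∂μ))).mono ?_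
      (Eventually.of_forall fun z => ?_)
    · exact (((hψ.continuous.comp continuous_dotQ.neg).aestronglyMeasurable.mul
        ((Complex.continuous_ofReal.comp_aestronglyMeasurable
          hE.aestronglyMeasurable).comp_quasiMeasurePreserving
          Measure.quasiMeasurePreserving_snd)).mul
        ((aestronglyMeasurable_fourierQ hψ.continuous
          hf.aestronglyMeasurable).comp_quasiMeasurePreserving
          Measure.quasiMeasurePreserving_snd)).mul
        (continuous_star.comp_aestronglyMeasurable
          (hh.aestronglyMeasurable.comp_quasiMeasurePreserving Measure.quasiMeasurePreserving_fst))
    · simp only [Function.uncurry, norm_mul, hψ.norm_eq_one, one_mul, Complex.norm_real,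
        RCLike.norm_conj, norm_norm, Real.norm_of_nonneg (Real.exp_pos _).le,
        Real.norm_of_nonneg (integral_nonneg fun _ => norm_nonneg (f _))]
      rw [mul_comm (‖h z.1‖)]
      gcongr
      exact norm_fourierQ_le hψ.norm_eq_one _
  calc ∫ x, heatT μ ψ A t f x * (starRingEnd ℂ) (h x) ∂μ
      = ∫ x, ∫ ξ in {ξ | 1 < ‖ξ‖}, ψ (-dotQ x ξ) * (Real.exp (-(t * A ξ)) : ℂ)
          * fourierQ μ ψ f ξ * (starRingEnd ℂ) (h x) ∂μ ∂μ := by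
        simp only [heatT_eq_setIntegral_fourierQ hψ ht hE hf, integral_mul_const]
    _ = ∫ ξ in {ξ | 1 < ‖ξ‖}, ∫ x, ψ (-dotQ x ξ) * (Real.exp (-(t * A ξ)) : ℂ)
          * fourierQ μ ψ f ξ * (starRingEnd ℂ) (h x) ∂μ ∂μ := integral_integral_swap hint
    _ = _ := by
        congr 1 with ξ
        rw [conj_fourierQ hψ, ← integral_const_mul]
        congr 1 with x
        ring

lemma integral_heatT_mul_conj_comm (hψ : IsUnitaryCharTrivialOnZp ψ) (ht : t ≠ 0)
    (hE : IntegrableOn (fun ξ => Real.exp (-(t * A ξ))) {ξ | 1 < ‖ξ‖} μ) (hf : Integrable f μ)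
    (hh : Integrable h μ) :
    ∫ x, heatT μ ψ A t f x * (starRingEnd ℂ) (h x) ∂μ
      = ∫ x, f x * (starRingEnd ℂ) (heatT μ ψ A t h x) ∂μ := by
  calc ∫ x, heatT μ ψ A t f x * (starRingEnd ℂ) (h x) ∂μ
      = (starRingEnd ℂ) (∫ x, heatT μ ψ A t h x * (starRingEnd ℂ) (f x) ∂μ) := by
        rw [integral_heatT_mul_conj hψ ht hE hf hh, integral_heatT_mul_conj hψ ht hE hh hf,
          ← integral_conj]
        congr 1 with ξ
        simp only [map_mul, Complex.conj_conj, Complex.conj_ofReal]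
        ring
    _ = ∫ x, f x * (starRingEnd ℂ) (heatT μ ψ A t h x) ∂μ := by
        rw [← integral_conj]
        congr 1 with x
        rw [map_mul, Complex.conj_conj, mul_comm]

lemma integral_heatT_mul_conj_self (hψ : IsUnitaryCharTrivialOnZp ψ) (ht : t ≠ 0)
    (hE : IntegrableOn (fun ξ => Real.exp (-(t * A ξ))) {ξ | 1 < ‖ξ‖} μ) (hf : Integrable f μ) :
    ∫ x, heatT μ ψ A t f x * (starRingEnd ℂ) (f x) ∂μ
      = ((∫ ξ in {ξ | 1 < ‖ξ‖}, Real.exp (-(t * A ξ)) * ‖fourierQ μ ψ f ξ‖ ^ 2 ∂μ : ℝ) : ℂ) := by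
  rw [integral_heatT_mul_conj hψ ht hE hf hf, ← integral_complex_ofReal]
  congr 1 with ξ
  rw [mul_assoc, Complex.mul_conj']
  push_cast
  ring

theorem exists_subseq_tendsto_eLpNorm_heatT {g : ℝ → ℝ} (hψ : IsUnitaryCharTrivialOnZp ψ)
    (hψ' : ∃ a : ℚ_[p], ‖a‖ ≤ p ∧ ψ a ≠ 1) (hrad : ∀ ξ, A ξ = g ‖ξ‖) (ht : t ≠ 0)
    (hE : IntegrableOn (fun ξ => Real.exp (-(t * A ξ))) {ξ | 1 < ‖ξ‖} μ)
    {F : ℕ → (Fin n → ℚ_[p]) → ℂ} (hF : ∀ m, Integrable (F m) μ)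
    (hsupp : ∀ m, ∀ᵐ x ∂μ, 1 < ‖x‖ → F m x = 0) (hF1 : ∀ m, ∫ x, ‖F m x‖ ∂μ ≤ 1) :
    ∃ (φ : ℕ → ℕ) (v : (Fin n → ℚ_[p]) → ℂ), StrictMono φ ∧ MemLp v 2 μ ∧
      Tendsto (fun j => eLpNorm (fun x => heatT μ ψ A t (F (φ j)) x - v x) 2 μ) atTop (𝓝 0) := by
  have htail := (tendsto_setIntegral_one_lt_mul_norm hE).const_mul 2
  rw [mul_zero] at htail
  have hequi : Equicontinuous fun m => heatT μ ψ A t (F m) :=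
    equicontinuous_of_continuity_modulus _ htail _ fun x y m =>
      (dist_heatT_le hψ ht hE (hF m) x y).trans <| mul_le_mul_of_nonneg_right
        (by linarith [hF1 m]) (integral_nonneg fun _ => (Real.exp_pos _).le)
  refine exists_subseq_tendsto_eLpNorm_of_equicontinuous (isCompact_closedBall 0 1)
    (isCompact_closedBall 0 1).measure_lt_top.ne hequi
    (C := ∫ ξ in {ξ | 1 < ‖ξ‖}, Real.exp (-(t * A ξ)) ∂μ) (fun m x => ?_) (fun m x hx => ?_) 2
  · exact (norm_heatT_le hψ ht hE (hF m) x).trans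
      (mul_le_of_le_one_right (integral_nonneg fun _ => (Real.exp_pos _).le) (hF1 m))
  · exact heatT_eq_zero_of_one_lt_norm hψ hψ' hrad ht hE (hF m) (hsupp m) (by simpa using hx)

end Heat

end PadicHeat

theorem heat_semigroup_compact_selfadjoint_nonneg_general {p n : ℕ} [Fact p.Prime]
    (μ : Measure (Fin n → ℚ_[p])) [μ.IsAddHaarMeasure]
    (hμ : μ (closedBall (0 : Fin n → ℚ_[p]) 1) = 1)
    (β C₀ : ℝ) (hβ : 0 < β) (hC₀ : 0 < C₀)
    (A : (Fin n → ℚ_[p]) → ℝ) (g : ℝ → ℝ)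
    (hrad : ∀ ξ : Fin n → ℚ_[p], A ξ = g ‖ξ‖)
    (hlow : ∀ ξ : Fin n → ℚ_[p], C₀ * ‖ξ‖ ^ β ≤ A ξ)
    (ψ : ℚ_[p] → ℂ) (hψcont : Continuous ψ)
    (hψadd : ∀ a b : ℚ_[p], ψ (a + b) = ψ a * ψ b)
    (hψnorm : ∀ a : ℚ_[p], ‖ψ a‖ = 1)
    (hψtriv : ∀ a : ℚ_[p], ‖a‖ ≤ 1 → ψ a = 1)
    (hψnontriv : ∃ a : ℚ_[p], ‖a‖ ≤ p ∧ ψ a ≠ 1)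
    (t : ℝ) (ht : 0 < t) :
    -- compactness
    (∀ F : ℕ → (Fin n → ℚ_[p]) → ℂ, (∀ m, MemL20 μ (F m)) →
      (∀ m, eLpNorm (F m) 2 μ ≤ 1) →
      ∃ (φ : ℕ → ℕ) (h : (Fin n → ℚ_[p]) → ℂ), StrictMono φ ∧ MemLp h 2 μ ∧
        Tendsto (fun j => eLpNorm (fun x => heatT μ ψ A t (F (φ j)) x - h x) 2 μ)
          atTop (nhds 0)) ∧
    -- self-adjointness
    (∀ f h : (Fin n → ℚ_[p]) → ℂ, MemL20 μ f → MemL20 μ h →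
      (∫ x, heatT μ ψ A t f x * (starRingEnd ℂ) (h x) ∂μ) =
        ∫ x, f x * (starRingEnd ℂ) (heatT μ ψ A t h x) ∂μ) ∧
    -- non-negativity
    (∀ f : (Fin n → ℚ_[p]) → ℂ, MemL20 μ f →
      0 ≤ (∫ x, heatT μ ψ A t f x * (starRingEnd ℂ) (f x) ∂μ).re ∧
      (∫ x, heatT μ ψ A t f x * (starRingEnd ℂ) (f x) ∂μ).im = 0) := by
  have hψ : IsUnitaryCharTrivialOnZp ψ := ⟨hψcont, hψadd, hψnorm, hψtriv⟩
  have hE := integrableOn_exp_neg_mul_symbol μ hβ hC₀ ht hrad hlow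
  refine ⟨fun F hF hF1 => ?_, fun f h hf hh => ?_, fun f hf => ?_⟩
  · exact exists_subseq_tendsto_eLpNorm_heatT hψ hψnontriv hrad ht.ne' hE
      (fun m => (hF m).integrable hμ) (fun m => (hF m).2.1)
      (fun m => (hF m).integral_norm_le_one hμ (hF1 m))
  · exact integral_heatT_mul_conj_comm hψ ht.ne' hE (hf.integrable hμ) (hh.integrable hμ)
  · rw [integral_heatT_mul_conj_self hψ ht.ne' hE (hf.integrable hμ), Complex.ofReal_re,
      Complex.ofReal_im]
    exact ⟨integral_nonneg fun ξ => by positivity, rfl⟩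

/-- For `t > 0` the operator `T(t) : L²₀(ℤ_p^n) → L²₀(ℤ_p^n)` is compact
(every sequence in the unit ball of `L²₀` has a subsequence whose image converges in `L²`),
self-adjoint (`⟨T(t)f, g⟩ = ⟨f, T(t)g⟩`) and non-negative (`⟨T(t)f, f⟩ ≥ 0`). -/
theorem heat_semigroup_compact_selfadjoint_nonneg {p n : ℕ} [Fact p.Prime] (hn : 0 < n)
    (μ : Measure (Fin n → ℚ_[p])) [μ.IsAddHaarMeasure]
    (hμ : μ (closedBall (0 : Fin n → ℚ_[p]) 1) = 1)
    (β C₀ C₁ : ℝ) (hβ : 0 < β) (hC₀ : 0 < C₀) (hC₁ : 0 < C₁)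
    (A : (Fin n → ℚ_[p]) → ℝ) (g : ℝ → ℝ)
    (hrad : ∀ ξ : Fin n → ℚ_[p], A ξ = g ‖ξ‖)
    (hlow : ∀ ξ : Fin n → ℚ_[p], C₀ * ‖ξ‖ ^ β ≤ A ξ)
    (hupp : ∀ ξ : Fin n → ℚ_[p], A ξ ≤ C₁ * ‖ξ‖ ^ β)
    (ψ : ℚ_[p] → ℂ) (hψcont : Continuous ψ)
    (hψadd : ∀ a b : ℚ_[p], ψ (a + b) = ψ a * ψ b)
    (hψnorm : ∀ a : ℚ_[p], ‖ψ a‖ = 1)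
    (hψtriv : ∀ a : ℚ_[p], ‖a‖ ≤ 1 → ψ a = 1)
    (hψnontriv : ∃ a : ℚ_[p], ‖a‖ ≤ p ∧ ψ a ≠ 1)
    (t : ℝ) (ht : 0 < t) :
    -- compactness
    (∀ F : ℕ → (Fin n → ℚ_[p]) → ℂ, (∀ m, MemL20 μ (F m)) →
      (∀ m, eLpNorm (F m) 2 μ ≤ 1) →
      ∃ (φ : ℕ → ℕ) (h : (Fin n → ℚ_[p]) → ℂ), StrictMono φ ∧ MemLp h 2 μ ∧
        Tendsto (fun j => eLpNorm (fun x => heatT μ ψ A t (F (φ j)) x - h x) 2 μ)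
          atTop (nhds 0)) ∧
    -- self-adjointness
    (∀ f h : (Fin n → ℚ_[p]) → ℂ, MemL20 μ f → MemL20 μ h →
      (∫ x, heatT μ ψ A t f x * (starRingEnd ℂ) (h x) ∂μ) =
        ∫ x, f x * (starRingEnd ℂ) (heatT μ ψ A t h x) ∂μ) ∧
    -- non-negativity
    (∀ f : (Fin n → ℚ_[p]) → ℂ, MemL20 μ f →
      0 ≤ (∫ x, heatT μ ψ A t f x * (starRingEnd ℂ) (f x) ∂μ).re ∧
      (∫ x, heatT μ ψ A t f x * (starRingEnd ℂ) (f x) ∂μ).im = 0) :=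
  heat_semigroup_compact_selfadjoint_nonneg_general μ hμ β C₀ hβ hC₀ A g hrad hlow ψ hψcont hψadd
    hψnorm hψtriv hψnontriv t ht
end

section
/- For every s ∈ ℂ with Re(s) > max{1, n/β}, the Mellin transform identity ∫_0^∞ t^{s−1} ( ∫_{ℚ_p^n∖ℤ_p^n} e^{−t A(ξ)} dⁿξ ) dt = Γ(s) · ζ(s;A_β) holds, where Γ is the Gamma function, and both sides converge absolutely. -/
/-!
On `1 < ‖ξ‖` the radial symbol `A` is constant on each sphere `‖ξ‖ = p ^ (m + 1)`, with value
`a m = g (p ^ (m + 1))`. Tiling the ball of radius `p ^ (k + 1)` by the `p ^ n` translates of the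
ball of radius `p ^ k` (one for each vector of leading `p`-adic digits) gives the Haar measure
`c m = p ^ ((m + 1) n) (1 - p ^ (-n))` of that sphere, so the heat trace is the exponential series
`∑ c m e^(-t a m)`. Its Mellin transform can be taken term by term, each term giving
`Γ(s) c m (a m) ^ (-s)`, because `∑ c m (a m) ^ (-Re s)` is dominated by a geometric series of ratio
`p ^ (n - β Re s) < 1`.
-/

open MeasureTheory Filter Topology Metric

open Set Function
open scoped ENNReal

theorem Real.exp_neg_le_div_rpow {y σ : ℝ} (hy : 0 < y) (hσ : 0 < σ) :
    Real.exp (-y) ≤ (σ / y) ^ σ := by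
  have hlin : y / σ ≤ Real.exp (y / σ) := by linarith [Real.add_one_le_exp (y / σ)]
  have hpow : (y / σ) ^ σ ≤ Real.exp y :=
    calc (y / σ) ^ σ ≤ Real.exp (y / σ) ^ σ := Real.rpow_le_rpow (by positivity) hlin hσ.le
      _ = Real.exp y := by rw [← Real.exp_mul, div_mul_cancel₀ _ hσ.ne']
  rw [Real.exp_neg, ← inv_div, Real.inv_rpow (by positivity)]
  exact inv_anti₀ (by positivity) hpow

theorem summable_mul_exp_neg_mul_of_summable_mul_rpow_neg {c a : ℕ → ℝ} {σ t : ℝ}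
    (hc : ∀ m, 0 ≤ c m) (ha : ∀ m, 0 < a m) (hσ : 0 < σ) (ht : 0 < t)
    (hsum : Summable fun m ↦ c m * a m ^ (-σ)) :
    Summable fun m ↦ c m * Real.exp (-(t * a m)) := by
  refine (hsum.mul_left ((σ / t) ^ σ)).of_nonneg_of_le (fun m ↦ by have := hc m; positivity)
    fun m ↦ ?_
  calc c m * Real.exp (-(t * a m)) ≤ c m * (σ / (t * a m)) ^ σ :=
        mul_le_mul_of_nonneg_left (Real.exp_neg_le_div_rpow (mul_pos ht (ha m)) hσ) (hc m)
    _ = (σ / t) ^ σ * (c m * a m ^ (-σ)) := by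
        rw [← div_div, div_eq_mul_inv _ (a m),
          Real.mul_rpow (by positivity) (inv_nonneg.2 (ha m).le), Real.inv_rpow (ha m).le,
          ← Real.rpow_neg (ha m).le]
        ring

theorem summable_mul_rpow_neg_of_le {c a : ℕ → ℝ} {R C β σ : ℝ} {n : ℕ} (hR : 1 < R)
    (hC : 0 < C) (hσ : 0 ≤ σ) (hnσ : n < β * σ) (hc₀ : ∀ m, 0 ≤ c m)
    (hc : ∀ m, c m ≤ (R ^ (m + 1)) ^ n) (ha : ∀ m, C * (R ^ (m + 1)) ^ β ≤ a m) :
    Summable fun m ↦ c m * a m ^ (-σ) := by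
  have hR₀ : 0 < R := zero_lt_one.trans hR
  have ha₀ (m : ℕ) : 0 < a m := lt_of_lt_of_le (by positivity) (ha m)
  set r := R ^ ((n : ℝ) - β * σ)
  have hr : r < 1 := Real.rpow_lt_one_of_one_lt_of_neg hR (by linarith)
  refine .of_nonneg_of_le (fun m ↦ mul_nonneg (hc₀ m) (Real.rpow_nonneg (ha₀ m).le _))
    (fun m ↦ ?_) ((summable_geometric_of_lt_one (by positivity) hr).mul_left (C ^ (-σ) * r))
  have hx : 0 < R ^ (m + 1) := by positivity
  calc c m * a m ^ (-σ) ≤ (R ^ (m + 1)) ^ n * (C * (R ^ (m + 1)) ^ β) ^ (-σ) :=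
        mul_le_mul (hc m) (Real.rpow_le_rpow_of_nonpos (by positivity) (ha m) (by linarith))
          (Real.rpow_nonneg (ha₀ m).le _) (by positivity)
    _ = C ^ (-σ) * (R ^ (m + 1)) ^ ((n : ℝ) - β * σ) := by
        rw [Real.mul_rpow hC.le (by positivity), ← Real.rpow_mul hx.le, ← Real.rpow_natCast,
          mul_left_comm, ← Real.rpow_add hx]
        ring_nf
    _ = C ^ (-σ) * r * r ^ m := by rw [← Real.rpow_pow_comm hR₀.le, pow_succ]; ring

theorem integrable_tsum_of_summable_integral_norm {α E ι : Type*} [MeasurableSpace α]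
    {μ : Measure α} [NormedAddCommGroup E] [CompleteSpace E] [Countable ι] {F : ι → α → E}
    (hF_int : ∀ i, Integrable (F i) μ) (hF_sum : Summable fun i ↦ ∫ a, ‖F i a‖ ∂μ) :
    Integrable (fun a ↦ ∑' i, F i a) μ := by
  set G : ι → α →₁[μ] E := fun i ↦ (hF_int i).toL1 (F i)
  have hG : ∑' i, ‖G i‖ₑ ≠ ∞ := tsum_enorm_ne_top_iff_summable_norm.2 <|
    hF_sum.congr fun i ↦ (L1.norm_of_fun_eq_integral_norm (hF_int i)).symm
  refine (L1.integrable_coeFn (∑' i, G i)).congr ?_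
  filter_upwards [Lp.coeFn_tsum hG, ae_all_iff.2 fun i ↦ (hF_int i).coeFn_toL1] with a h hGF
  exact h.trans (tsum_congr hGF)

theorem hasSum_setIntegral_iUnion_of_eqOn_const {α E ι : Type*} [MeasurableSpace α]
    {μ : Measure α} [NormedAddCommGroup E] [NormedSpace ℝ E] [CompleteSpace E] [Countable ι]
    {S : ι → Set α} {f : α → E} {c : ι → E} (hS : ∀ i, MeasurableSet (S i))
    (hd : Pairwise (Disjoint on S)) (hfin : ∀ i, μ (S i) ≠ ∞) (hf : ∀ i, EqOn f (fun _ ↦ c i) (S i))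
    (hsum : Summable fun i ↦ μ.real (S i) * ‖c i‖) :
    HasSum (fun i ↦ μ.real (S i) • c i) (∫ x in ⋃ i, S i, f x ∂μ) := by
  have hint (i : ι) : IntegrableOn f (S i) μ :=
    (integrableOn_const (hfin i)).congr_fun (hf i).symm (hS i)
  have hnorm (i : ι) : ∫ x in S i, ‖f x‖ ∂μ = μ.real (S i) * ‖c i‖ := by
    rw [setIntegral_congr_fun (hS i) fun x hx ↦ congrArg norm (hf i hx), setIntegral_const,
      smul_eq_mul]
  have hval (i : ι) : ∫ x in S i, f x ∂μ = μ.real (S i) • c i := by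
    rw [setIntegral_congr_fun (hS i) (hf i), setIntegral_const]
  simpa only [hval] using hasSum_integral_iUnion hS hd
    (integrableOn_iUnion_of_summable_integral_norm hint (hsum.congr fun i ↦ (hnorm i).symm))

open Complex in
theorem integrableOn_cpow_mul_exp_neg_mul {s : ℂ} {b : ℝ} (hs : 0 < s.re) (hb : 0 < b) :
    IntegrableOn (fun t : ℝ ↦ (t : ℂ) ^ (s - 1) * Real.exp (-b * t)) (Ioi 0) := by
  refine Integrable.mono' (g := fun t ↦ t ^ (s.re - 1) * Real.exp (-b * t)) ?_ ?_ ?_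
  · have h := integrableOn_rpow_mul_exp_neg_mul_rpow (s := s.re - 1) (by linarith) one_pos hb
    simp only [Real.rpow_one] at h
    exact h
  · refine ContinuousOn.aestronglyMeasurable (fun t ht ↦ ?_) measurableSet_Ioi
    exact ((continuousAt_ofReal_cpow_const _ _ (Or.inr (ne_of_gt ht))).mul
      (by fun_prop)).continuousWithinAt
  · filter_upwards [ae_restrict_mem measurableSet_Ioi] with t (ht : 0 < t)
    rw [norm_mul, norm_cpow_eq_rpow_re_of_pos ht, norm_real,
      Real.norm_of_nonneg (Real.exp_nonneg _), sub_re, one_re]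

theorem mellinConvergent_of_hasSum_exp {ι : Type*} [Countable ι] {a : ι → ℂ} {p : ι → ℝ}
    {F : ℝ → ℂ} {s : ℂ} (hp : ∀ i, 0 < p i) (hs : 0 < s.re)
    (hF : ∀ t ∈ Ioi 0, HasSum (fun i ↦ a i * Real.exp (-p i * t)) (F t))
    (h_sum : Summable fun i ↦ ‖a i‖ / p i ^ s.re) : MellinConvergent F s := by
  set G : ι → ℝ → ℂ := fun i t ↦ a i * ((t : ℂ) ^ (s - 1) * Real.exp (-p i * t))
  have hG_int (i : ι) : IntegrableOn (G i) (Ioi 0) :=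
    (integrableOn_cpow_mul_exp_neg_mul hs (hp i)).const_mul (a i)
  have hG_norm (i : ι) : ∫ t in Ioi 0, ‖G i t‖ = ‖a i‖ / p i ^ s.re * Real.Gamma s.re := by
    have hnorm : EqOn (fun t ↦ ‖G i t‖)
        (fun t ↦ ‖a i‖ * (t ^ (s.re - 1) * Real.exp (-(p i * t)))) (Ioi 0) := fun t ht ↦ by
      simp only [G, norm_mul, Complex.norm_cpow_eq_rpow_re_of_pos ht, Complex.norm_real,
        Real.norm_of_nonneg (Real.exp_nonneg _), Complex.sub_re, Complex.one_re, neg_mul]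
    rw [setIntegral_congr_fun measurableSet_Ioi hnorm, integral_const_mul,
      Real.integral_rpow_mul_exp_neg_mul_Ioi hs (hp i), one_div, Real.inv_rpow (hp i).le]
    ring
  refine (integrable_tsum_of_summable_integral_norm hG_int
    ((h_sum.mul_right _).congr fun i ↦ (hG_norm i).symm)).congr ?_
  filter_upwards [ae_restrict_mem measurableSet_Ioi] with t ht
  rw [← (hF t ht).tsum_eq, smul_eq_mul, ← tsum_mul_left]
  exact tsum_congr fun i ↦ mul_left_comm _ _ _

theorem mellinConvergent_and_summable_and_mellin_eq_of_hasSum_exp {ι : Type*} [Countable ι]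
    {c a : ι → ℝ} {H : ℝ → ℝ} {s : ℂ} (hc : ∀ i, 0 ≤ c i) (ha : ∀ i, 0 < a i) (hs : 0 < s.re)
    (hH : ∀ t ∈ Ioi 0, HasSum (fun i ↦ c i * Real.exp (-(t * a i))) (H t))
    (hsum : Summable fun i ↦ c i * a i ^ (-s.re)) :
    MellinConvergent (fun t ↦ (H t : ℂ)) s ∧
      Summable (fun i ↦ ‖(c i : ℂ) * (a i : ℂ) ^ (-s)‖) ∧
      mellin (fun t ↦ (H t : ℂ)) s = Complex.Gamma s * ∑' i, (c i : ℂ) * (a i : ℂ) ^ (-s) := by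
  have hF (t : ℝ) (ht : t ∈ Ioi 0) :
      HasSum (fun i ↦ (c i : ℂ) * Real.exp (-a i * t)) (H t : ℂ) := by
    simpa only [neg_mul, mul_comm t, Complex.ofReal_mul] using Complex.hasSum_ofReal.2 (hH t ht)
  have hnorm (i : ι) : ‖(c i : ℂ)‖ / a i ^ s.re = c i * a i ^ (-s.re) := by
    rw [Complex.norm_real, Real.norm_of_nonneg (hc i), Real.rpow_neg (ha i).le, div_eq_mul_inv]
  have hsum' : Summable fun i ↦ ‖(c i : ℂ)‖ / a i ^ s.re := hsum.congr fun i ↦ (hnorm i).symm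
  refine ⟨mellinConvergent_of_hasSum_exp ha hs hF hsum', hsum'.congr fun i ↦ ?_, ?_⟩
  · rw [norm_mul, Complex.norm_cpow_eq_rpow_re_of_pos (ha i), Complex.neg_re,
      Real.rpow_neg (ha i).le, div_eq_mul_inv]
  · rw [← tsum_mul_left, ← (hasSum_mellin (fun i ↦ Or.inr (ha i)) hs hF hsum').tsum_eq]
    exact tsum_congr fun i ↦ by rw [Complex.cpow_neg, mul_div_assoc, div_eq_mul_inv]

namespace PadicInt

variable {p : ℕ} [Fact p.Prime]

theorem norm_sub_val_lt_one_iff (x : ℤ_[p]) (d : ZMod p) :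
    ‖x - (d.val : ℤ_[p])‖ < 1 ↔ toZMod x = d := by
  rw [← mem_nonunits, ← IsLocalRing.mem_maximalIdeal, ← ker_toZMod, RingHom.mem_ker, map_sub,
    map_natCast, ZMod.natCast_zmod_val, sub_eq_zero]

theorem norm_sub_val_mul_inv_pow_le_iff (x : ℤ_[p]) (k : ℕ) (d : ZMod p) :
    ‖((x : ℚ_[p]) - d.val) * (p : ℚ_[p])⁻¹ ^ (k + 1)‖ ≤ (p : ℝ) ^ k ↔ toZMod x = d := by
  have hp₀ : (0 : ℝ) < p := Nat.cast_pos.2 (Fact.out : p.Prime).pos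
  rw [← norm_sub_val_lt_one_iff, norm_mul, norm_pow, norm_inv, Padic.norm_p, inv_inv,
    ← le_div_iff₀ (by positivity), pow_succ, div_mul_cancel_left₀ (pow_ne_zero k hp₀.ne'),
    ← zpow_neg_one, norm_def, coe_sub, coe_natCast, Padic.norm_le_pow_iff_norm_lt_pow_add_one]
  norm_num

end PadicInt

namespace Padic

variable {p : ℕ} [Fact p.Prime] {ι : Type*} [Fintype ι]

noncomputable def digitCenter (k : ℕ) (d : ι → ZMod p) : ι → ℚ_[p] :=
  fun i ↦ ((d i).val : ℚ_[p]) * (p : ℚ_[p])⁻¹ ^ (k + 1)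

theorem mem_closedBall_digitCenter_iff (k : ℕ) (w : ι → ℤ_[p]) (d : ι → ZMod p) :
    (fun i ↦ (w i : ℚ_[p]) * (p : ℚ_[p])⁻¹ ^ (k + 1)) ∈ closedBall (digitCenter k d) (p ^ k) ↔
      PadicInt.toZMod ∘ w = d := by
  simp only [mem_closedBall, dist_eq_norm,
    pi_norm_le_iff_of_nonneg (by positivity : (0 : ℝ) ≤ p ^ k), Pi.sub_apply, digitCenter,
    ← sub_mul, PadicInt.norm_sub_val_mul_inv_pow_le_iff, funext_iff, comp_apply]

theorem exists_eq_padicInt_mul_of_mem_closedBall {k : ℕ} {x : ι → ℚ_[p]}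
    (hx : x ∈ closedBall 0 ((p : ℝ) ^ (k + 1))) :
    ∃ w : ι → ℤ_[p], x = fun i ↦ (w i : ℚ_[p]) * (p : ℚ_[p])⁻¹ ^ (k + 1) := by
  have hp : (p : ℚ_[p]) ≠ 0 := Nat.cast_ne_zero.2 (Fact.out : p.Prime).ne_zero
  have hp₀ : (0 : ℝ) < p := Nat.cast_pos.2 (Fact.out : p.Prime).pos
  have hw (i : ι) : ‖x i * (p : ℚ_[p]) ^ (k + 1)‖ ≤ 1 := by
    rw [norm_mul, norm_pow, norm_p, inv_pow, ← div_eq_mul_inv, div_le_one (by positivity)]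
    exact (norm_le_pi_norm x i).trans (mem_closedBall_zero_iff.1 hx)
  exact ⟨fun i ↦ ⟨_, hw i⟩, funext fun i ↦ by simp [hp]⟩

theorem closedBall_digitCenter_subset (k : ℕ) (d : ι → ZMod p) :
    closedBall (digitCenter k d) ((p : ℝ) ^ k) ⊆ closedBall 0 ((p : ℝ) ^ (k + 1)) := by
  have hp₁ : (1 : ℝ) ≤ p := Nat.one_le_cast.2 (Fact.out : p.Prime).one_le
  intro x hx
  refine mem_closedBall.2 ((IsUltrametricDist.dist_triangle_max x (digitCenter k d) 0).trans
    (max_le ((mem_closedBall.1 hx).trans (pow_le_pow_right₀ hp₁ k.le_succ)) ?_))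
  rw [dist_zero_right]
  refine (pi_norm_le_iff_of_nonneg (by positivity)).2 fun i ↦ ?_
  rw [digitCenter, norm_mul, norm_pow, norm_inv, norm_p, inv_inv]
  exact mul_le_of_le_one_left (by positivity) (by exact_mod_cast norm_int_le_one ((d i).val : ℤ))

theorem closedBall_pow_succ_eq_iUnion (k : ℕ) :
    closedBall (0 : ι → ℚ_[p]) ((p : ℝ) ^ (k + 1)) =
      ⋃ d : ι → ZMod p, closedBall (digitCenter k d) ((p : ℝ) ^ k) := by
  refine Subset.antisymm (fun x hx ↦ ?_) (iUnion_subset (closedBall_digitCenter_subset k))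
  obtain ⟨w, rfl⟩ := exists_eq_padicInt_mul_of_mem_closedBall hx
  exact mem_iUnion.2 ⟨_, (mem_closedBall_digitCenter_iff k w _).2 rfl⟩

theorem pairwise_disjoint_closedBall_digitCenter (k : ℕ) :
    Pairwise (Disjoint on fun d : ι → ZMod p ↦ closedBall (digitCenter k d) ((p : ℝ) ^ k)) := by
  intro d d' hne
  refine Set.disjoint_left.2 fun x hx hx' ↦ hne ?_
  obtain ⟨w, rfl⟩ :=
    exists_eq_padicInt_mul_of_mem_closedBall (closedBall_digitCenter_subset k d hx)
  exact ((mem_closedBall_digitCenter_iff k w d).1 hx).symm.trans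
    ((mem_closedBall_digitCenter_iff k w d').1 hx')

theorem norm_le_pow_iff_lt_pow_succ (ξ : ι → ℚ_[p]) (m : ℕ) :
    ‖ξ‖ ≤ (p : ℝ) ^ m ↔ ‖ξ‖ < (p : ℝ) ^ (m + 1) := by
  have hp₀ : (0 : ℝ) < p := Nat.cast_pos.2 (Fact.out : p.Prime).pos
  rw [pi_norm_le_iff_of_nonneg (by positivity), pi_norm_lt_iff (by positivity)]
  exact forall_congr' fun i ↦ by exact_mod_cast norm_le_pow_iff_norm_lt_pow_add_one (ξ i) m

theorem sphere_pow_succ_eq_diff (m : ℕ) :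
    sphere (0 : ι → ℚ_[p]) ((p : ℝ) ^ (m + 1)) =
      closedBall 0 ((p : ℝ) ^ (m + 1)) \ closedBall 0 ((p : ℝ) ^ m) := by
  ext ξ
  rw [Set.mem_sdiff, mem_closedBall_zero_iff, mem_closedBall_zero_iff,
    norm_le_pow_iff_lt_pow_succ ξ m, not_lt, mem_sphere_zero_iff_norm, le_antisymm_iff]

theorem iUnion_sphere_pow_succ :
    ⋃ m : ℕ, sphere (0 : ι → ℚ_[p]) ((p : ℝ) ^ (m + 1)) = {ξ | 1 < ‖ξ‖} := by
  have hp₁ : (1 : ℝ) < p := Nat.one_lt_cast.2 (Fact.out : p.Prime).one_lt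
  ext ξ
  simp only [mem_iUnion, mem_sphere_zero_iff_norm, mem_ofPred_eq]
  constructor
  · rintro ⟨m, hm⟩
    exact hm ▸ one_lt_pow₀ hp₁ m.succ_ne_zero
  · intro hξ
    obtain ⟨k, hk, hk'⟩ := exists_nat_pow_near hξ.le hp₁
    have hnorm : ‖ξ‖ = (p : ℝ) ^ k := le_antisymm ((norm_le_pow_iff_lt_pow_succ ξ k).2 hk') hk
    rcases k with _ | m
    · exact absurd hnorm (by simpa using hξ.ne')
    · exact ⟨m, hnorm⟩

theorem exists_norm_eq_pow [Nonempty ι] (k : ℕ) : ∃ ξ : ι → ℚ_[p], ‖ξ‖ = (p : ℝ) ^ k :=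
  ⟨fun _ ↦ (p : ℚ_[p])⁻¹ ^ k, by rw [pi_norm_const, norm_pow, norm_inv, norm_p, inv_inv]⟩

variable [MeasurableSpace (ι → ℚ_[p])] [BorelSpace (ι → ℚ_[p])] (μ : Measure (ι → ℚ_[p]))
  [μ.IsAddHaarMeasure]

theorem measure_closedBall_pow (hμ : μ (closedBall 0 1) = 1) (k : ℕ) :
    μ (closedBall 0 ((p : ℝ) ^ k)) = (p : ℝ≥0∞) ^ (k * Fintype.card ι) := by
  classical
  have : NeZero p := ⟨(Fact.out : p.Prime).ne_zero⟩
  induction k with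
  | zero => simpa using hμ
  | succ k ih =>
    rw [closedBall_pow_succ_eq_iUnion, measure_iUnion (pairwise_disjoint_closedBall_digitCenter k)
      fun _ ↦ measurableSet_closedBall, tsum_fintype]
    simp only [Measure.addHaar_closedBall_center, ih, Finset.sum_const, Finset.card_univ,
      Fintype.card_fun, ZMod.card, nsmul_eq_mul]
    push_cast
    ring

theorem measureReal_sphere_pow_succ (hμ : μ (closedBall 0 1) = 1) (m : ℕ) :
    μ.real (sphere 0 ((p : ℝ) ^ (m + 1))) =
      (p : ℝ) ^ ((m + 1) * Fintype.card ι) * (1 - (p : ℝ) ^ (-(Fintype.card ι : ℤ))) := by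
  have hp₀ : (p : ℝ) ≠ 0 := Nat.cast_ne_zero.2 (Fact.out : p.Prime).ne_zero
  have hp₁ : (1 : ℝ) ≤ p := Nat.one_le_cast.2 (Fact.out : p.Prime).one_le
  rw [sphere_pow_succ_eq_diff, measureReal_sdiff
    (closedBall_subset_closedBall (pow_le_pow_right₀ hp₁ m.le_succ)) measurableSet_closedBall
    measure_closedBall_lt_top.ne, measureReal_def, measureReal_def, measure_closedBall_pow μ hμ,
    measure_closedBall_pow μ hμ]
  simp only [ENNReal.toReal_pow, ENNReal.toReal_natCast]
  rw [mul_sub, mul_one, ← zpow_natCast, ← zpow_natCast, ← zpow_add₀ hp₀]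
  congr 2
  push_cast
  ring

theorem summable_measureReal_sphere_mul_rpow_neg (hμ : μ (closedBall 0 1) = 1) {a : ℕ → ℝ}
    {C β σ : ℝ} (hC : 0 < C) (ha : ∀ m, C * ((p : ℝ) ^ (m + 1)) ^ β ≤ a m) (hσ : 0 ≤ σ)
    (hσβ : (Fintype.card ι : ℝ) < β * σ) :
    Summable fun m : ℕ ↦ μ.real (sphere 0 ((p : ℝ) ^ (m + 1))) * a m ^ (-σ) := by
  have hp₀ : (0 : ℝ) < p := Nat.cast_pos.2 (Fact.out : p.Prime).pos
  refine summable_mul_rpow_neg_of_le (Nat.one_lt_cast.2 (Fact.out : p.Prime).one_lt) hC hσ hσβ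
    (fun _ ↦ measureReal_nonneg) (fun m ↦ ?_) ha
  rw [measureReal_sphere_pow_succ μ hμ, ← pow_mul, mul_comm (m + 1)]
  exact mul_le_of_le_one_right (by positivity) (sub_le_self _ (by positivity))

theorem hasSum_setIntegral_one_lt_norm_of_radial {E : Type*} [NormedAddCommGroup E]
    [NormedSpace ℝ E] [CompleteSpace E] {f : (ι → ℚ_[p]) → E} {g : ℝ → E}
    (hf : ∀ ξ, f ξ = g ‖ξ‖)
    (hsum : Summable fun m : ℕ ↦
      μ.real (sphere 0 ((p : ℝ) ^ (m + 1))) * ‖g ((p : ℝ) ^ (m + 1))‖) :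
    HasSum (fun m : ℕ ↦ μ.real (sphere 0 ((p : ℝ) ^ (m + 1))) • g ((p : ℝ) ^ (m + 1)))
      (∫ ξ in {ξ | 1 < ‖ξ‖}, f ξ ∂μ) := by
  have hp₁ : (1 : ℝ) < p := Nat.one_lt_cast.2 (Fact.out : p.Prime).one_lt
  rw [← iUnion_sphere_pow_succ]
  refine hasSum_setIntegral_iUnion_of_eqOn_const (fun _ ↦ isClosed_sphere.measurableSet)
    (fun m m' hne ↦ ?_) (fun _ ↦ (isCompact_sphere _ _).measure_lt_top.ne)
    (fun m ξ hξ ↦ by rw [hf, mem_sphere_zero_iff_norm.1 hξ]) hsum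
  refine Set.disjoint_left.2 fun ξ hξ hξ' ↦ hne ?_
  rw [mem_sphere_zero_iff_norm] at hξ hξ'
  simpa using pow_right_injective₀ (zero_lt_one.trans hp₁) hp₁.ne' (hξ.symm.trans hξ')

theorem hasSum_setIntegral_exp_neg_mul_of_radial {A : (ι → ℚ_[p]) → ℝ} {g : ℝ → ℝ}
    (hA : ∀ ξ, A ξ = g ‖ξ‖) (hg : ∀ m : ℕ, 0 < g ((p : ℝ) ^ (m + 1))) {σ t : ℝ} (hσ : 0 < σ)
    (ht : 0 < t)
    (hsum : Summable fun m : ℕ ↦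
      μ.real (sphere 0 ((p : ℝ) ^ (m + 1))) * g ((p : ℝ) ^ (m + 1)) ^ (-σ)) :
    HasSum (fun m : ℕ ↦ μ.real (sphere 0 ((p : ℝ) ^ (m + 1))) *
        Real.exp (-(t * g ((p : ℝ) ^ (m + 1)))))
      (∫ ξ in {ξ | 1 < ‖ξ‖}, Real.exp (-(t * A ξ)) ∂μ) := by
  have hexp := summable_mul_exp_neg_mul_of_summable_mul_rpow_neg
    (fun _ ↦ measureReal_nonneg) hg hσ ht hsum
  exact hasSum_setIntegral_one_lt_norm_of_radial μ (g := fun r ↦ Real.exp (-(t * g r)))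
    (fun ξ ↦ by rw [hA]) (by simpa only [Real.norm_of_nonneg (Real.exp_nonneg _)] using hexp)

end Padic

theorem mellin_transform_of_heat_trace_general {p n : ℕ} [Fact p.Prime] (hn : 0 < n)
    (μ : Measure (Fin n → ℚ_[p])) [μ.IsAddHaarMeasure]
    (hμ : μ (closedBall (0 : Fin n → ℚ_[p]) 1) = 1)
    (β C₀ : ℝ) (hβ : 0 < β) (hC₀ : 0 < C₀)
    (A : (Fin n → ℚ_[p]) → ℝ) (g : ℝ → ℝ)
    (hrad : ∀ ξ : Fin n → ℚ_[p], A ξ = g ‖ξ‖)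
    (hlow : ∀ ξ : Fin n → ℚ_[p], C₀ * ‖ξ‖ ^ β ≤ A ξ)
    (s : ℂ) (hs : max 1 ((n : ℝ) / β) < s.re) :
    IntegrableOn
      (fun t : ℝ => (t : ℂ) ^ (s - 1) *
        ((∫ ξ in {ξ : Fin n → ℚ_[p] | 1 < ‖ξ‖}, Real.exp (-(t * A ξ)) ∂μ : ℝ) : ℂ))
      (Set.Ioi (0 : ℝ)) ∧
    Summable (fun m : ℕ =>
      ‖(p : ℂ) ^ ((m + 1) * n) * (1 - (p : ℂ) ^ (-(n : ℤ))) *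
        (g ((p : ℝ) ^ (m + 1)) : ℂ) ^ (-s)‖) ∧
    (∫ t in Set.Ioi (0 : ℝ), (t : ℂ) ^ (s - 1) *
        ((∫ ξ in {ξ : Fin n → ℚ_[p] | 1 < ‖ξ‖}, Real.exp (-(t * A ξ)) ∂μ : ℝ) : ℂ)) =
      Complex.Gamma s *
        ∑' m : ℕ, (p : ℂ) ^ ((m + 1) * n) * (1 - (p : ℂ) ^ (-(n : ℤ))) *
          (g ((p : ℝ) ^ (m + 1)) : ℂ) ^ (-s) := by
  have hp₀ : (0 : ℝ) < p := Nat.cast_pos.2 (Fact.out : p.Prime).pos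
  have hσ : 0 < s.re := one_pos.trans ((le_max_left _ _).trans_lt hs)
  have hnσ : (n : ℝ) < β * s.re := by
    rw [mul_comm, ← div_lt_iff₀ hβ]
    exact (le_max_right _ _).trans_lt hs
  have hg (m : ℕ) : C₀ * ((p : ℝ) ^ (m + 1)) ^ β ≤ g ((p : ℝ) ^ (m + 1)) := by
    have := Fin.pos_iff_nonempty.1 hn
    obtain ⟨ξ, hξ⟩ := Padic.exists_norm_eq_pow (ι := Fin n) (p := p) (m + 1)
    simpa only [hrad, hξ] using hlow ξ
  have hg₀ (m : ℕ) : 0 < g ((p : ℝ) ^ (m + 1)) := lt_of_lt_of_le (by positivity) (hg m)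
  have hζ := Padic.summable_measureReal_sphere_mul_rpow_neg μ hμ hC₀ hg hσ.le
    (by simpa using hnσ)
  have hcoef (m : ℕ) : (p : ℂ) ^ ((m + 1) * n) * (1 - (p : ℂ) ^ (-(n : ℤ))) =
      (μ.real (sphere 0 ((p : ℝ) ^ (m + 1))) : ℂ) := by
    rw [Padic.measureReal_sphere_pow_succ μ hμ, Fintype.card_fin]
    push_cast
    rfl
  simp only [hcoef]
  exact mellinConvergent_and_summable_and_mellin_eq_of_hasSum_exp (fun _ ↦ measureReal_nonneg)
    hg₀ hσ (fun t ht ↦ Padic.hasSum_setIntegral_exp_neg_mul_of_radial μ hrad hg₀ hσ ht hζ) hζ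

/-- For `Re(s) > max{1, n/β}` the Mellin transform identity
`∫_0^∞ t^{s−1} (∫_{ℚ_p^n∖ℤ_p^n} e^{−tA(ξ)} dⁿξ) dt = Γ(s) ζ(s;A_β)` holds, and both sides
converge absolutely. -/
theorem mellin_transform_of_heat_trace {p n : ℕ} [Fact p.Prime] (hn : 0 < n)
    (μ : Measure (Fin n → ℚ_[p])) [μ.IsAddHaarMeasure]
    (hμ : μ (closedBall (0 : Fin n → ℚ_[p]) 1) = 1)
    (β C₀ C₁ : ℝ) (hβ : 0 < β) (hC₀ : 0 < C₀) (hC₁ : 0 < C₁)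
    (A : (Fin n → ℚ_[p]) → ℝ) (g : ℝ → ℝ)
    (hrad : ∀ ξ : Fin n → ℚ_[p], A ξ = g ‖ξ‖)
    (hlow : ∀ ξ : Fin n → ℚ_[p], C₀ * ‖ξ‖ ^ β ≤ A ξ)
    (hupp : ∀ ξ : Fin n → ℚ_[p], A ξ ≤ C₁ * ‖ξ‖ ^ β)
    (s : ℂ) (hs : max 1 ((n : ℝ) / β) < s.re) :
    IntegrableOn
      (fun t : ℝ => (t : ℂ) ^ (s - 1) *
        ((∫ ξ in {ξ : Fin n → ℚ_[p] | 1 < ‖ξ‖}, Real.exp (-(t * A ξ)) ∂μ : ℝ) : ℂ))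
      (Set.Ioi (0 : ℝ)) ∧
    Summable (fun m : ℕ =>
      ‖(p : ℂ) ^ ((m + 1) * n) * (1 - (p : ℂ) ^ (-(n : ℤ))) *
        (g ((p : ℝ) ^ (m + 1)) : ℂ) ^ (-s)‖) ∧
    (∫ t in Set.Ioi (0 : ℝ), (t : ℂ) ^ (s - 1) *
        ((∫ ξ in {ξ : Fin n → ℚ_[p] | 1 < ‖ξ‖}, Real.exp (-(t * A ξ)) ∂μ : ℝ) : ℂ)) =
      Complex.Gamma s *
        ∑' m : ℕ, (p : ℂ) ^ ((m + 1) * n) * (1 - (p : ℂ) ^ (-(n : ℤ))) *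
          (g ((p : ℝ) ^ (m + 1)) : ℂ) ^ (-s) :=
  mellin_transform_of_heat_trace_general hn μ hμ β C₀ hβ hC₀ A g hrad hlow s hs
end

section
/- There exist constants d, D > 0 (depending only on p, n, β) such that ∫_{ℚ_p^n} e^{−t ‖ξ‖_p^{β}} dⁿξ ≤ D t^{−n/β} for all t > 0, and d t^{−n/β} ≤ ∫_{ℚ_p^n∖ℤ_p^n} e^{−t ‖ξ‖_p^{β}} dⁿξ for all 0 < t ≤ 1. -/
/-
The Haar measure of the ball of radius `p ^ k` is `p ^ (n * k)`: the ball of radius `p ^ (k + 1)`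
is the disjoint union of the `p ^ n` translates of the ball of radius `p ^ k` by the digit vectors
`v * p ^ (-(k + 1))`, `v ∈ {0, …, p - 1} ^ n`.

With `r = t ^ (-1 / β)` the integrand is `exp (-(‖ξ‖ / r) ^ β)`. For the upper bound, cut
`ℚ_[p] ^ n` into the ball of radius `p ^ m ≥ r` and the shells
`p ^ (m + k) ≤ ‖ξ‖ ≤ p ^ (m + k + 1)`: together they contribute `p ^ (n * m)` times a series that
converges because `exp (-p ^ (k * β))` beats `p ^ (n * k)`, and `p ^ (n * m) ≤ p ^ n * r ^ n`.
For the lower bound, the single shell `p ^ j < ‖ξ‖ ≤ p ^ (j + 1)` with `p ^ j ≤ r < p ^ (j + 1)`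
has measure comparable to `r ^ n`, and the integrand is at least `exp (-p ^ β)` on it.
-/

open MeasureTheory Filter Topology Metric

open scoped ENNReal

theorem IsUltrametricDist.measure_closedBall_eq_card_mul {E ι : Type*} [NormedAddCommGroup E]
    [IsUltrametricDist E] [MeasurableSpace E] [BorelSpace E] (μ : Measure E) [μ.IsAddHaarMeasure]
    [Fintype ι] (c : ι → E) {r R : ℝ} (hrR : r ≤ R) (hc : ∀ i, ‖c i‖ ≤ R)
    (hcover : ∀ x, ‖x‖ ≤ R → ∃ i, ‖x - c i‖ ≤ r)
    (hsep : Pairwise fun i j ↦ r < ‖c i - c j‖) :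
    μ (closedBall 0 R) = Fintype.card ι * μ (closedBall 0 r) := by
  have hunion : closedBall (0 : E) R = ⋃ i, closedBall (c i) r := by
    ext x
    simp only [mem_closedBall, dist_eq_norm, sub_zero, Set.mem_iUnion]
    refine ⟨hcover x, fun ⟨i, hi⟩ ↦ ?_⟩
    calc ‖x‖ = ‖(x - c i) + c i‖ := by rw [sub_add_cancel]
      _ ≤ max ‖x - c i‖ ‖c i‖ := IsUltrametricDist.norm_add_le_max _ _
      _ ≤ R := max_le (hi.trans hrR) (hc i)
  have hdisj : Pairwise (Function.onFun Disjoint fun i ↦ closedBall (c i) r) := by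
    refine fun i j hij ↦ Set.disjoint_left.2 fun x hxi hxj ↦ (hsep hij).not_ge ?_
    rw [mem_closedBall] at hxi hxj
    rw [← dist_eq_norm]
    exact (IsUltrametricDist.dist_triangle_max _ x _).trans
      (max_le (by rwa [dist_comm]) hxj)
  rw [hunion, measure_iUnion hdisj fun _ ↦ measurableSet_closedBall, tsum_fintype]
  simp [Measure.addHaar_closedBall_center]

theorem summable_exp_neg_rpow_mul_pow {b β B : ℝ} (hb : 1 < b) (hβ : 0 < β) (hB : 0 ≤ B) :
    Summable fun k : ℕ ↦ Real.exp (-(b ^ k) ^ β) * B ^ k := by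
  set q := b ^ β
  have hq : 1 < q := Real.one_lt_rpow hb hβ
  obtain ⟨N, hN⟩ := pow_unbounded_of_one_lt B hq
  have hqN : 0 < q ^ N := by positivity
  have hgeom := summable_geometric_of_lt_one (by positivity) ((div_lt_one hqN).2 hN)
  refine Summable.of_nonneg_of_le (fun k ↦ by positivity) (fun k ↦ ?_)
    (hgeom.mul_left (N.factorial : ℝ))
  have hexp : Real.exp (-q ^ k) ≤ N.factorial / (q ^ k) ^ N := by
    rw [Real.exp_neg, inv_eq_one_div, div_le_div_iff₀ (Real.exp_pos _) (by positivity), one_mul,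
      ← div_le_iff₀' (by positivity)]
    exact Real.pow_div_factorial_le_exp _ (by positivity) N
  rw [← Real.rpow_pow_comm (by linarith) β k]
  calc Real.exp (-q ^ k) * B ^ k ≤ N.factorial / (q ^ k) ^ N * B ^ k := by gcongr
    _ = N.factorial * (B / q ^ N) ^ k := by
      rw [div_pow, ← pow_mul, ← pow_mul, mul_comm N k]; ring

theorem AntitoneOn.lintegral_comp_norm_le_tsum {E : Type*} [NormedAddCommGroup E]
    [MeasurableSpace E] [OpensMeasurableSpace E] {g : ℝ → ℝ≥0∞} (hg : AntitoneOn g (Set.Ici 0))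
    (μ : Measure E) {b : ℝ} (hb : 1 < b) (m : ℤ) :
    ∫⁻ x, g ‖x‖ ∂μ ≤ g 0 * μ (closedBall 0 (b ^ m))
      + ∑' k : ℕ, g (b ^ (m + k)) * μ (closedBall 0 (b ^ (m + k + 1))) := by
  have hb0 : 0 < b := zero_lt_one.trans hb
  have hpt (x : E) : g ‖x‖ ≤ (closedBall 0 (b ^ m)).indicator (fun _ ↦ g 0) x
      + ∑' k : ℕ, (closedBall 0 (b ^ (m + k + 1))).indicator (fun _ ↦ g (b ^ (m + k))) x := by
    by_cases hx : ‖x‖ ≤ b ^ m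
    · calc g ‖x‖ ≤ g 0 := hg Set.self_mem_Ici (norm_nonneg x) (norm_nonneg x)
        _ = _ := (Set.indicator_of_mem (mem_closedBall_zero_iff.2 hx) (fun _ ↦ g 0)).symm
        _ ≤ _ := le_self_add
    · obtain ⟨e, he, he'⟩ := exists_mem_Ico_zpow ((zpow_pos hb0 m).trans (not_le.1 hx)) hb
      obtain ⟨k, rfl⟩ : ∃ k : ℕ, e = m + k := by
        refine ⟨(e - m).toNat, ?_⟩
        have : m < e + 1 := (zpow_lt_zpow_iff_right₀ hb).1 ((not_le.1 hx).trans he')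
        omega
      calc g ‖x‖ ≤ g (b ^ (m + k)) := hg (zpow_pos hb0 _).le (norm_nonneg x) he
        _ = _ := (Set.indicator_of_mem (mem_closedBall_zero_iff.2 he'.le)
          (fun _ ↦ g (b ^ (m + k)))).symm
        _ ≤ _ := ENNReal.le_tsum k
        _ ≤ _ := le_add_self
  refine (lintegral_mono hpt).trans_eq ?_
  rw [lintegral_add_left (measurable_const.indicator measurableSet_closedBall),
    lintegral_tsum fun k ↦ (measurable_const.indicator measurableSet_closedBall).aemeasurable,
    lintegral_indicator_const measurableSet_closedBall]
  simp_rw [lintegral_indicator_const measurableSet_closedBall]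

namespace Padic

variable {p : ℕ} [Fact p.Prime]

theorem exists_norm_sub_natCast_mul_zpow_le (k : ℤ) {z : ℚ_[p]}
    (hz : ‖z‖ ≤ (p : ℝ) ^ (k + 1)) :
    ∃ j : Fin p, ‖z - j * (p : ℚ_[p]) ^ (-(k + 1))‖ ≤ (p : ℝ) ^ k := by
  have hp : (p : ℚ_[p]) ≠ 0 := Nat.cast_ne_zero.2 (Fact.out : p.Prime).ne_zero
  have hp0 : (0 : ℝ) < p := Nat.cast_pos.2 (Fact.out : p.Prime).pos
  set w := z * (p : ℚ_[p]) ^ (k + 1)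
  have hw : ‖w‖ ≤ 1 := by
    rw [norm_mul, norm_p_zpow, ← le_div_iff₀ (by positivity), one_div, ← zpow_neg, neg_neg]
    exact hz
  obtain ⟨j, hjp, hj⟩ := PadicInt.exists_mem_range ⟨w, hw⟩
  rw [IsLocalRing.mem_maximalIdeal, PadicInt.mem_nonunits, PadicInt.norm_def] at hj
  refine ⟨⟨j, hjp⟩, ?_⟩
  have : z - j * (p : ℚ_[p]) ^ (-(k + 1)) = (w - j) * (p : ℚ_[p]) ^ (-(k + 1)) := by
    simp only [w, sub_mul, mul_assoc, ← zpow_add₀ hp, add_neg_cancel, zpow_zero, mul_one]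
  rw [this, norm_le_pow_iff_norm_lt_pow_add_one, norm_mul, norm_p_zpow, neg_neg]
  exact mul_lt_of_lt_one_left (by positivity) hj

theorem norm_natCast_sub_natCast_of_ne {i j : Fin p} (h : i ≠ j) :
    ‖(i : ℚ_[p]) - j‖ = 1 := by
  refine le_antisymm (by simpa using norm_int_le_one (p := p) ((i : ℤ) - j))
    (not_lt.1 fun hlt ↦ h ?_)
  have hdvd : (p : ℤ) ∣ (i : ℤ) - j := norm_intCast_lt_one_iff.1 (by simpa using hlt)
  have := Int.eq_zero_of_abs_lt_dvd hdvd (abs_sub_lt_iff.2 ⟨by omega, by omega⟩)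
  exact Fin.ext (by omega)

variable {n : ℕ} (μ : Measure (Fin n → ℚ_[p])) [μ.IsAddHaarMeasure]

theorem measure_closedBall_zpow_add_one (k : ℤ) :
    μ (closedBall 0 ((p : ℝ) ^ (k + 1))) = p ^ n * μ (closedBall 0 ((p : ℝ) ^ k)) := by
  have hp1 : (1 : ℝ) < p := Nat.one_lt_cast.2 (Fact.out : p.Prime).one_lt
  have hp0 : (0 : ℝ) < p := zero_lt_one.trans hp1
  set s : ℚ_[p] := (p : ℚ_[p]) ^ (-(k + 1))
  have hs : ‖s‖ = (p : ℝ) ^ (k + 1) := by rw [norm_p_zpow, neg_neg]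
  have hpk : (p : ℝ) ^ k < (p : ℝ) ^ (k + 1) := zpow_lt_zpow_right₀ hp1 (by omega)
  have key := IsUltrametricDist.measure_closedBall_eq_card_mul μ
    (fun v : Fin n → Fin p ↦ fun i ↦ (v i : ℚ_[p]) * s) hpk.le ?_ ?_ ?_
  · simpa using key
  · refine fun v ↦ (pi_norm_le_iff_of_nonneg (by positivity)).2 fun i ↦ ?_
    rw [norm_mul, hs]
    exact mul_le_of_le_one_left (by positivity) (by simpa using norm_int_le_one (p := p) (v i))
  · intro x hx
    choose v hv using fun i ↦
      exists_norm_sub_natCast_mul_zpow_le k ((pi_norm_le_iff_of_nonneg (by positivity)).1 hx i)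
    exact ⟨v, (pi_norm_le_iff_of_nonneg (by positivity)).2 hv⟩
  · intro v w hvw
    obtain ⟨i, hi⟩ := Function.ne_iff.1 hvw
    calc (p : ℝ) ^ k < ‖((v i : ℚ_[p]) - w i) * s‖ := by
          rwa [norm_mul, norm_natCast_sub_natCast_of_ne hi, one_mul, hs]
      _ ≤ _ := by
          rw [sub_mul]
          exact norm_le_pi_norm ((fun i ↦ (v i : ℚ_[p]) * s) - fun i ↦ (w i : ℚ_[p]) * s) i

theorem measure_closedBall_zpow (hμ : μ (closedBall 0 1) = 1) (k : ℤ) :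
    μ (closedBall 0 ((p : ℝ) ^ k)) = ENNReal.ofReal (((p : ℝ) ^ k) ^ n) := by
  have hp0 : (0 : ℝ) < p := Nat.cast_pos.2 (Fact.out : p.Prime).pos
  have hstep (k : ℤ) : ENNReal.ofReal (((p : ℝ) ^ (k + 1)) ^ n)
      = p ^ n * ENNReal.ofReal (((p : ℝ) ^ k) ^ n) := by
    rw [zpow_add_one₀ hp0.ne', mul_pow, ENNReal.ofReal_mul (by positivity),
      ENNReal.ofReal_pow hp0.le, ENNReal.ofReal_natCast, mul_comm]
  induction k using Int.induction_on with
  | zero => simpa using hμ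
  | succ k ih => rw [measure_closedBall_zpow_add_one, ih, hstep]
  | pred k ih =>
    have h := measure_closedBall_zpow_add_one μ (-k - 1)
    rw [sub_add_cancel, ih, ← sub_add_cancel (-(k : ℤ)) 1, hstep, sub_add_cancel] at h
    exact ((ENNReal.mul_right_inj (by simp [(Fact.out : p.Prime).ne_zero]) (by simp)).1 h).symm

noncomputable def shellSum (p n : ℕ) (β : ℝ) : ℝ :=
  ∑' k : ℕ, Real.exp (-((p : ℝ) ^ k) ^ β) * ((p : ℝ) ^ n) ^ k

omit [Fact p.Prime] in
theorem shellSum_nonneg (n : ℕ) (β : ℝ) : 0 ≤ shellSum p n β := by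
  unfold shellSum; positivity

variable {β : ℝ}

theorem lintegral_exp_neg_norm_div_zpow_rpow_le (hμ : μ (closedBall 0 1) = 1) (hβ : 0 < β)
    (m : ℤ) :
    ∫⁻ ξ, ENNReal.ofReal (Real.exp (-(‖ξ‖ / (p : ℝ) ^ m) ^ β)) ∂μ
      ≤ ENNReal.ofReal (((p : ℝ) ^ m) ^ n * (1 + p ^ n * shellSum p n β)) := by
  have hp1 : (1 : ℝ) < p := Nat.one_lt_cast.2 (Fact.out : p.Prime).one_lt
  have hp0 : (0 : ℝ) < p := zero_lt_one.trans hp1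
  have hpm : (0 : ℝ) < (p : ℝ) ^ m := zpow_pos hp0 m
  have hg :
      AntitoneOn (fun x ↦ ENNReal.ofReal (Real.exp (-(x / (p : ℝ) ^ m) ^ β))) (Set.Ici 0) :=
    fun x hx y _ hxy ↦ ENNReal.ofReal_le_ofReal <| Real.exp_le_exp.2 <| neg_le_neg <|
      Real.rpow_le_rpow (div_nonneg hx hpm.le) (div_le_div_of_nonneg_right hxy hpm.le) hβ.le
  refine (hg.lintegral_comp_norm_le_tsum μ hp1 m).trans_eq ?_
  have hterm (k : ℕ) : ENNReal.ofReal (Real.exp (-((p : ℝ) ^ (m + k) / (p : ℝ) ^ m) ^ β))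
      * μ (closedBall 0 ((p : ℝ) ^ (m + k + 1)))
      = ENNReal.ofReal (((p : ℝ) ^ m) ^ n)
        * ENNReal.ofReal (p ^ n * (Real.exp (-((p : ℝ) ^ k) ^ β) * ((p : ℝ) ^ n) ^ k)) := by
    rw [measure_closedBall_zpow μ hμ, ← ENNReal.ofReal_mul (by positivity),
      ← ENNReal.ofReal_mul (by positivity)]
    simp only [zpow_add₀ hp0.ne', mul_div_cancel_left₀ _ hpm.ne', zpow_natCast, zpow_one]
    ring_nf
  have hsum := summable_exp_neg_rpow_mul_pow hp1 hβ (pow_nonneg hp0.le n)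
  rw [tsum_congr hterm, ENNReal.tsum_mul_left,
    ← ENNReal.ofReal_tsum_of_nonneg (fun k ↦ by positivity) (hsum.mul_left _), tsum_mul_left,
    measure_closedBall_zpow μ hμ, zero_div, Real.zero_rpow hβ.ne', neg_zero, Real.exp_zero,
    ENNReal.ofReal_one, one_mul, ← ENNReal.ofReal_mul (by positivity),
    ← ENNReal.ofReal_add (by positivity) (by positivity), mul_add, mul_one, shellSum]

theorem lintegral_exp_neg_norm_div_rpow_le (hμ : μ (closedBall 0 1) = 1) (hβ : 0 < β) {r : ℝ}
    (hr : 0 < r) :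
    ∫⁻ ξ, ENNReal.ofReal (Real.exp (-(‖ξ‖ / r) ^ β)) ∂μ
      ≤ ENNReal.ofReal (p ^ n * (1 + p ^ n * shellSum p n β) * r ^ n) := by
  have hp1 : (1 : ℝ) < p := Nat.one_lt_cast.2 (Fact.out : p.Prime).one_lt
  have hp0 : (0 : ℝ) < p := zero_lt_one.trans hp1
  obtain ⟨j, hj, hj'⟩ := exists_mem_Ico_zpow hr hp1
  calc ∫⁻ ξ, ENNReal.ofReal (Real.exp (-(‖ξ‖ / r) ^ β)) ∂μ
      ≤ ∫⁻ ξ, ENNReal.ofReal (Real.exp (-(‖ξ‖ / (p : ℝ) ^ (j + 1)) ^ β)) ∂μ :=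
        lintegral_mono fun ξ ↦ ENNReal.ofReal_le_ofReal <| Real.exp_le_exp.2 <| neg_le_neg <|
          Real.rpow_le_rpow (by positivity)
            (div_le_div_of_nonneg_left (norm_nonneg _) hr hj'.le) hβ.le
    _ ≤ ENNReal.ofReal (((p : ℝ) ^ (j + 1)) ^ n * (1 + p ^ n * shellSum p n β)) :=
        lintegral_exp_neg_norm_div_zpow_rpow_le μ hμ hβ (j + 1)
    _ ≤ _ := by
        have hS := shellSum_nonneg (p := p) n β
        have : ((p : ℝ) ^ (j + 1)) ^ n * (1 + p ^ n * shellSum p n β)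
            = p ^ n * (1 + p ^ n * shellSum p n β) * ((p : ℝ) ^ j) ^ n := by
          rw [zpow_add_one₀ hp0.ne']; ring
        rw [this]
        gcongr

theorem integrable_exp_neg_norm_div_rpow (hμ : μ (closedBall 0 1) = 1) (hβ : 0 < β) {r : ℝ}
    (hr : 0 < r) : Integrable (fun ξ ↦ Real.exp (-(‖ξ‖ / r) ^ β)) μ := by
  have hcont : Continuous fun ξ : Fin n → ℚ_[p] ↦ Real.exp (-(‖ξ‖ / r) ^ β) := by
    fun_prop (disch := exact hβ.le)
  refine ⟨hcont.aestronglyMeasurable, ?_⟩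
  rw [hasFiniteIntegral_iff_ofReal (ae_of_all _ fun _ ↦ (Real.exp_pos _).le)]
  exact (lintegral_exp_neg_norm_div_rpow_le μ hμ hβ hr).trans_lt ENNReal.ofReal_lt_top

theorem integral_exp_neg_norm_div_rpow_le (hμ : μ (closedBall 0 1) = 1) (hβ : 0 < β) {r : ℝ}
    (hr : 0 < r) :
    ∫ ξ, Real.exp (-(‖ξ‖ / r) ^ β) ∂μ ≤ p ^ n * (1 + p ^ n * shellSum p n β) * r ^ n := by
  have hS := shellSum_nonneg (p := p) n β
  rw [integral_eq_lintegral_of_nonneg_ae (ae_of_all _ fun _ ↦ (Real.exp_pos _).le)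
    (integrable_exp_neg_norm_div_rpow μ hμ hβ hr).aestronglyMeasurable]
  exact ENNReal.toReal_le_of_le_ofReal (by positivity)
    (lintegral_exp_neg_norm_div_rpow_le μ hμ hβ hr)

theorem le_setIntegral_exp_neg_norm_div_rpow (hμ : μ (closedBall 0 1) = 1) (hβ : 0 < β)
    {r : ℝ} (hr : 1 ≤ r) :
    Real.exp (-(p : ℝ) ^ β) * (1 - ((p : ℝ) ^ n)⁻¹) * r ^ n
      ≤ ∫ ξ in {ξ | 1 < ‖ξ‖}, Real.exp (-(‖ξ‖ / r) ^ β) ∂μ := by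
  have hp1 : (1 : ℝ) < p := Nat.one_lt_cast.2 (Fact.out : p.Prime).one_lt
  have hp0 : (0 : ℝ) < p := zero_lt_one.trans hp1
  have hr0 : 0 < r := zero_lt_one.trans_le hr
  obtain ⟨j, hj, hj'⟩ := exists_mem_Ico_zpow hr0 hp1
  have hj0 : 0 ≤ j := by
    have : 0 < j + 1 := (one_lt_zpow_iff_right₀ hp1).1 (hr.trans_lt hj')
    omega
  set A := closedBall (0 : Fin n → ℚ_[p]) ((p : ℝ) ^ (j + 1)) \ closedBall 0 ((p : ℝ) ^ j)
  have hAsub : A ⊆ {ξ | 1 < ‖ξ‖} := fun ξ hξ ↦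
    (one_le_zpow₀ hp1.le hj0).trans_lt (by simpa using hξ.2)
  have hAmeas : MeasurableSet A := measurableSet_closedBall.diff measurableSet_closedBall
  have hAreal : μ.real A = ((p : ℝ) ^ (j + 1)) ^ n * (1 - ((p : ℝ) ^ n)⁻¹) := by
    rw [measureReal_sdiff (closedBall_subset_closedBall (zpow_le_zpow_right₀ hp1.le (by omega)))
      measurableSet_closedBall (isCompact_closedBall _ _).measure_lt_top.ne]
    simp only [measureReal_def, measure_closedBall_zpow μ hμ]
    rw [ENNReal.toReal_ofReal (by positivity), ENNReal.toReal_ofReal (by positivity),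
      zpow_add_one₀ hp0.ne', mul_pow]
    field_simp
  have hlow (ξ) (hξ : ξ ∈ A) :
      Real.exp (-(p : ℝ) ^ β) ≤ Real.exp (-(‖ξ‖ / r) ^ β) := by
    refine Real.exp_le_exp.2 (neg_le_neg (Real.rpow_le_rpow (by positivity) ?_ hβ.le))
    calc ‖ξ‖ / r ≤ (p : ℝ) ^ (j + 1) / (p : ℝ) ^ j :=
          div_le_div₀ (by positivity) (by simpa using hξ.1) (by positivity) hj
      _ = p := by rw [zpow_add_one₀ hp0.ne', mul_div_cancel_left₀ _ (zpow_pos hp0 j).ne']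
  have hint := integrable_exp_neg_norm_div_rpow μ hμ hβ hr0
  calc Real.exp (-(p : ℝ) ^ β) * (1 - ((p : ℝ) ^ n)⁻¹) * r ^ n
      ≤ Real.exp (-(p : ℝ) ^ β) * μ.real A := by
        rw [hAreal, mul_assoc, mul_comm _ (r ^ n)]
        gcongr
        exact sub_nonneg.2 (inv_le_one_of_one_le₀ (one_le_pow₀ hp1.le))
    _ ≤ ∫ ξ in A, Real.exp (-(‖ξ‖ / r) ^ β) ∂μ :=
        setIntegral_ge_of_const_le_real hAmeas
          ((measure_mono Set.sdiff_subset).trans_lt (isCompact_closedBall _ _).measure_lt_top).ne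
          hlow hint.integrableOn
    _ ≤ _ := setIntegral_mono_set hint.integrableOn
        (ae_of_all _ fun _ ↦ (Real.exp_pos _).le) hAsub.eventuallyLE

end Padic

theorem mul_rpow_eq_div_rpow_neg_inv {t x β : ℝ} (ht : 0 < t) (hx : 0 ≤ x) (hβ : β ≠ 0) :
    t * x ^ β = (x / t ^ (-β⁻¹)) ^ β := by
  rw [Real.div_rpow hx (by positivity), ← Real.rpow_mul ht.le, neg_mul, inv_mul_cancel₀ hβ,
    Real.rpow_neg_one, div_inv_eq_mul, mul_comm]

theorem rpow_neg_div_eq_rpow_neg_inv_pow {t β : ℝ} (ht : 0 < t) (n : ℕ) :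
    t ^ (-((n : ℝ) / β)) = (t ^ (-β⁻¹)) ^ n := by
  rw [← Real.rpow_natCast, ← Real.rpow_mul ht.le]
  ring_nf

/-- There are constants `d, D > 0` (depending only on `p, n, β`) such that
`∫_{ℚ_p^n} e^{−t‖ξ‖^β} dⁿξ ≤ D t^{−n/β}` for all `t > 0`, and
`d t^{−n/β} ≤ ∫_{ℚ_p^n∖ℤ_p^n} e^{−t‖ξ‖^β} dⁿξ` for all `0 < t ≤ 1`. -/
theorem gaussian_type_integral_bounds {p n : ℕ} [Fact p.Prime] (hn : 0 < n)
    (μ : Measure (Fin n → ℚ_[p])) [μ.IsAddHaarMeasure]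
    (hμ : μ (closedBall (0 : Fin n → ℚ_[p]) 1) = 1)
    (β : ℝ) (hβ : 0 < β) :
    ∃ d D : ℝ, 0 < d ∧ 0 < D ∧
      (∀ t : ℝ, 0 < t →
        (∫ ξ : Fin n → ℚ_[p], Real.exp (-(t * ‖ξ‖ ^ β)) ∂μ) ≤ D * t ^ (-((n : ℝ) / β))) ∧
      (∀ t : ℝ, 0 < t → t ≤ 1 →
        d * t ^ (-((n : ℝ) / β)) ≤
          ∫ ξ in {ξ : Fin n → ℚ_[p] | 1 < ‖ξ‖}, Real.exp (-(t * ‖ξ‖ ^ β)) ∂μ) := by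
  have hp1 : (1 : ℝ) < p := Nat.one_lt_cast.2 (Fact.out : p.Prime).one_lt
  have hPinv : ((p : ℝ) ^ n)⁻¹ < 1 := inv_lt_one_of_one_lt₀ (one_lt_pow₀ hp1 hn.ne')
  have hS := Padic.shellSum_nonneg (p := p) n β
  have hscale (t : ℝ) (ht : 0 < t) :
      (fun ξ : Fin n → ℚ_[p] ↦ Real.exp (-(t * ‖ξ‖ ^ β)))
        = fun ξ ↦ Real.exp (-(‖ξ‖ / t ^ (-β⁻¹)) ^ β) := by
    simp only [mul_rpow_eq_div_rpow_neg_inv ht (norm_nonneg _) hβ.ne']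
  refine ⟨Real.exp (-(p : ℝ) ^ β) * (1 - ((p : ℝ) ^ n)⁻¹),
    p ^ n * (1 + p ^ n * Padic.shellSum p n β), mul_pos (Real.exp_pos _) (sub_pos.2 hPinv),
    by positivity, fun t ht ↦ ?_, fun t ht ht1 ↦ ?_⟩
  · rw [hscale t ht, rpow_neg_div_eq_rpow_neg_inv_pow ht]
    exact Padic.integral_exp_neg_norm_div_rpow_le μ hμ hβ (by positivity)
  · rw [hscale t ht, rpow_neg_div_eq_rpow_neg_inv_pow ht]
    exact Padic.le_setIntegral_exp_neg_norm_div_rpow μ hμ hβ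
      (Real.one_le_rpow_of_pos_of_le_one_of_nonpos ht ht1 (by simp [hβ.le]))
end
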